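/- arXiv:2105.10600 — 7 statements merged into one kernel-verified Lean document; each statement's English description precedes it below -/
import Mathlib

section
/- Let (Ω, μ) be a σ-finite measure space and let φ be a Musielak function on Ω with complementary function φ̄(x,s) = sup_{t ≥ 0} (s t − φ(x,t)). Let u_n, u : Ω → ℝ be measurable and suppose u_n converges to u in the modular sense, i.e. there exists λ > 0 such that ∫_Ω φ(x, |u_n(x) − u(x)|/λ) dμ → 0 as n → ∞. Then for every measurable g : Ω → ℝ for which there exists μ₀ > 0 with ∫_Ω φ̄(x, |g(x)|/μ₀) dμ < ∞, the products (u_n − u)·g are integrable for all sufficiently large n and ∫_Ω (u_n(x) − u(x)) g(x) dμ → 0 as n → ∞. -/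
open MeasureTheory Filter Topology
open scoped ENNReal

/-!
Young's inequality `st ≤ φ(x,t) + φ̄(x,s)`, applied to `t = |uₙ - u|/λ` and `s = |g|/(μ₀k)`, gives
`∫ |(uₙ - u) g| ≤ λμ₀ (k ∫ φ(x, |uₙ - u|/λ) + ∫ k φ̄(x, |g|/(μ₀k)))` for every `k ≥ 1`.
The first term tends to `0` as `n → ∞` for fixed `k`. The second tends to `0` as `k → ∞` by
dominated convergence: `k φ̄(s/k) ≤ φ̄(s)` because `φ ≥ 0`, and `k φ̄(s/k) → 0` because `φ(t)/t`
is bounded below by a positive constant away from `t = 0`.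
-/

noncomputable def complementaryFun (f : ℝ → ℝ) (s : ℝ) : ℝ :=
  sSup {y : ℝ | ∃ t : ℝ, 0 ≤ t ∧ y = s * t - f t}

section ComplementaryFun

variable {f : ℝ → ℝ}

lemma eventually_mul_le_of_tendsto_div_atTop
    (hf_top : Tendsto (fun t => f t / t) atTop atTop) (s : ℝ) :
    ∀ᶠ t in atTop, s * t ≤ f t := by
  filter_upwards [hf_top.eventually_ge_atTop s, eventually_gt_atTop 0] with t hst ht
  rwa [le_div_iff₀ ht] at hst

lemma bddAbove_complementaryFun (hf_nonneg : ∀ t, 0 ≤ t → 0 ≤ f t)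
    (hf_top : Tendsto (fun t => f t / t) atTop atTop) {s : ℝ} (hs : 0 ≤ s) :
    BddAbove {y : ℝ | ∃ t : ℝ, 0 ≤ t ∧ y = s * t - f t} := by
  obtain ⟨T, hT⟩ := (eventually_mul_le_of_tendsto_div_atTop hf_top s).exists_forall_of_atTop
  refine ⟨s * max T 0, ?_⟩
  rintro _ ⟨t, ht, rfl⟩
  rcases le_total t (max T 0) with h | h
  · nlinarith [hf_nonneg t ht, mul_le_mul_of_nonneg_left h hs]
  · nlinarith [hT t (le_of_max_le_left h), mul_nonneg hs (le_max_right T 0)]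

lemma mul_le_add_complementaryFun (hf_nonneg : ∀ t, 0 ≤ t → 0 ≤ f t)
    (hf_top : Tendsto (fun t => f t / t) atTop atTop) {s t : ℝ} (hs : 0 ≤ s) (ht : 0 ≤ t) :
    s * t ≤ f t + complementaryFun f s := by
  have := le_csSup (bddAbove_complementaryFun hf_nonneg hf_top hs) ⟨t, ht, rfl⟩
  rw [complementaryFun]
  linarith

lemma complementaryFun_nonneg (hf_nonneg : ∀ t, 0 ≤ t → 0 ≤ f t)
    (hf_top : Tendsto (fun t => f t / t) atTop atTop) (hf_zero : f 0 = 0) {s : ℝ} (hs : 0 ≤ s) :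
    0 ≤ complementaryFun f s := by
  simpa [hf_zero] using mul_le_add_complementaryFun hf_nonneg hf_top hs le_rfl

lemma complementaryFun_le_mul (hf_nonneg : ∀ t, 0 ≤ t → 0 ≤ f t) {σ δ : ℝ} (hσ : 0 ≤ σ)
    (hδ : 0 ≤ δ) (h : ∀ t, δ ≤ t → σ * t ≤ f t) :
    complementaryFun f σ ≤ σ * δ := by
  refine csSup_le ⟨σ * 0 - f 0, 0, le_rfl, rfl⟩ ?_
  rintro _ ⟨t, ht, rfl⟩
  rcases le_total t δ with htδ | hδt
  · nlinarith [hf_nonneg t ht, mul_le_mul_of_nonneg_left htδ hσ]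
  · nlinarith [h t hδt, mul_nonneg hσ hδ]

lemma mul_complementaryFun_div_le (hf_nonneg : ∀ t, 0 ≤ t → 0 ≤ f t)
    (hf_top : Tendsto (fun t => f t / t) atTop atTop) {s k : ℝ} (hs : 0 ≤ s) (hk : 1 ≤ k) :
    k * complementaryFun f (s / k) ≤ complementaryFun f s := by
  have hk0 : 0 < k := zero_lt_one.trans_le hk
  rw [← le_div_iff₀' hk0]
  refine csSup_le ⟨s / k * 0 - f 0, 0, le_rfl, rfl⟩ ?_
  rintro _ ⟨t, ht, rfl⟩
  rw [le_div_iff₀' hk0]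
  have hft := hf_nonneg t ht
  calc k * (s / k * t - f t) = s * t - k * f t := by field_simp
    _ ≤ s * t - f t := by nlinarith
    _ ≤ complementaryFun f s := by
      linarith [mul_le_add_complementaryFun hf_nonneg hf_top hs ht]

lemma exists_pos_forall_mul_le (hf_pos : ∀ t, 0 < t → 0 < f t)
    (hf_mono : MonotoneOn f (Set.Ici 0)) (hf_top : Tendsto (fun t => f t / t) atTop atTop)
    {δ : ℝ} (hδ : 0 < δ) : ∃ c > 0, ∀ t, δ ≤ t → c * t ≤ f t := by
  obtain ⟨T, hT⟩ := (eventually_mul_le_of_tendsto_div_atTop hf_top 1).exists_forall_of_atTop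
  have hT' : 0 < max T δ := hδ.trans_le (le_max_right T δ)
  refine ⟨min 1 (f δ / max T δ), lt_min one_pos (div_pos (hf_pos δ hδ) hT'), fun t ht => ?_⟩
  have ht0 : 0 ≤ t := hδ.le.trans ht
  rcases le_total (max T δ) t with h | h
  · calc min 1 (f δ / max T δ) * t ≤ 1 * t := mul_le_mul_of_nonneg_right (min_le_left _ _) ht0
      _ ≤ f t := hT t (le_of_max_le_left h)
  · calc min 1 (f δ / max T δ) * t ≤ f δ / max T δ * max T δ :=
          mul_le_mul (min_le_right _ _) h ht0 (div_pos (hf_pos δ hδ) hT').le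
      _ = f δ := div_mul_cancel₀ _ hT'.ne'
      _ ≤ f t := hf_mono hδ.le ht0 ht

lemma tendsto_mul_complementaryFun_div (hf_nonneg : ∀ t, 0 ≤ t → 0 ≤ f t) (hf_zero : f 0 = 0)
    (hf_pos : ∀ t, 0 < t → 0 < f t) (hf_mono : MonotoneOn f (Set.Ici 0))
    (hf_top : Tendsto (fun t => f t / t) atTop atTop) {s : ℝ} (hs : 0 ≤ s) :
    Tendsto (fun k : ℝ => k * complementaryFun f (s / k)) atTop (𝓝 0) := by
  refine tendsto_order.2 ⟨fun a ha => ?_, fun ε hε => ?_⟩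
  · filter_upwards [eventually_ge_atTop 0] with k hk
    exact ha.trans_le <| mul_nonneg hk <|
      complementaryFun_nonneg hf_nonneg hf_top hf_zero (div_nonneg hs hk)
  · have hδ : 0 < ε / (s + 1) := by positivity
    obtain ⟨c, hc, hct⟩ := exists_pos_forall_mul_le hf_pos hf_mono hf_top hδ
    filter_upwards [eventually_gt_atTop 0, eventually_ge_atTop (s / c)] with k hk hks
    have hσc : s / k ≤ c := by
      rw [div_le_iff₀ hk]
      rwa [div_le_iff₀ hc, mul_comm] at hks
    have hσ : ∀ t, ε / (s + 1) ≤ t → s / k * t ≤ f t := fun t ht =>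
      (mul_le_mul_of_nonneg_right hσc (hδ.le.trans ht)).trans (hct t ht)
    calc k * complementaryFun f (s / k) ≤ k * (s / k * (ε / (s + 1))) :=
          mul_le_mul_of_nonneg_left
            (complementaryFun_le_mul hf_nonneg (div_nonneg hs hk.le) hδ.le hσ) hk.le
      _ = ε * (s / (s + 1)) := by field_simp
      _ < ε := mul_lt_of_lt_one_right hε ((div_lt_one (by positivity)).2 (lt_add_one s))

lemma complementaryFun_eq_iSup_rat (hf_cont : ContinuousOn f (Set.Ici 0)) (s : ℝ) :
    complementaryFun f s = ⨆ q : ℚ, (s * max (q : ℝ) 0 - f (max (q : ℝ) 0)) := by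
  set G : ℝ → ℝ := fun r => s * max r 0 - f (max r 0)
  have hG : Continuous G :=
    (continuous_const.mul (continuous_id.max continuous_const)).sub <|
      hf_cont.comp_continuous (continuous_id.max continuous_const) fun r => le_max_right r 0
  have hrange : {y : ℝ | ∃ t : ℝ, 0 ≤ t ∧ y = s * t - f t} = Set.range G := by
    ext y
    constructor
    · rintro ⟨t, ht, rfl⟩
      exact ⟨t, by simp only [G, max_eq_left ht]⟩
    · rintro ⟨r, rfl⟩
      exact ⟨max r 0, le_max_right r 0, rfl⟩
  rw [complementaryFun, hrange, ← iSup, ← Rat.denseRange_cast.ciSup' hG, iSup_range']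

lemma abs_mul_le_young (hf_nonneg : ∀ t, 0 ≤ t → 0 ≤ f t)
    (hf_top : Tendsto (fun t => f t / t) atTop atTop) (a b : ℝ) {lam μ₀ k : ℝ} (hlam : 0 < lam)
    (hμ₀ : 0 < μ₀) (hk : 0 < k) :
    |a * b| ≤ lam * μ₀ * (k * f (|a| / lam) + k * complementaryFun f (|b| / μ₀ / k)) := by
  have hyoung := mul_le_add_complementaryFun hf_nonneg hf_top
    (s := |b| / μ₀ / k) (t := |a| / lam) (by positivity) (by positivity)
  calc |a * b| = lam * μ₀ * (k * (|b| / μ₀ / k * (|a| / lam))) := by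
        rw [abs_mul]
        field_simp
    _ ≤ lam * μ₀ * (k * (f (|a| / lam) + complementaryFun f (|b| / μ₀ / k))) := by gcongr
    _ = _ := by ring

end ComplementaryFun

lemma ENNReal.tendsto_nhds_zero_of_le_mul_add {T ρ D : ℕ → ℝ≥0∞} {C : ℝ≥0∞} (hC : C ≠ ∞)
    (hρ : Tendsto ρ atTop (𝓝 0)) (hD : Tendsto D atTop (𝓝 0))
    (h : ∀ k, 0 < k → ∀ n, T n ≤ C * (k * ρ n + D k)) :
    Tendsto T atTop (𝓝 0) := by
  rw [ENNReal.tendsto_nhds_zero]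
  intro ε hε
  have hε2 : 0 < ε / 2 := ENNReal.half_pos hε.ne'
  have hCD : Tendsto (fun k => C * D k) atTop (𝓝 0) := by
    simpa using ENNReal.Tendsto.const_mul hD (Or.inr hC)
  obtain ⟨k, hkD, hk⟩ :=
    ((ENNReal.tendsto_nhds_zero.1 hCD _ hε2).and (eventually_gt_atTop 0)).exists
  have hCρ : Tendsto (fun n => C * (k * ρ n)) atTop (𝓝 0) := by
    simpa using ENNReal.Tendsto.const_mul
      (ENNReal.Tendsto.const_mul hρ (Or.inr (ENNReal.natCast_ne_top k))) (Or.inr hC)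
  filter_upwards [ENNReal.tendsto_nhds_zero.1 hCρ _ hε2] with n hn
  calc T n ≤ C * (k * ρ n) + C * D k := (h k hk n).trans_eq (mul_add _ _ _)
    _ ≤ ε / 2 + ε / 2 := add_le_add hn hkD
    _ = ε := ENNReal.add_halves ε

lemma eventually_integrable_and_tendsto_integral_of_tendsto_lintegral_enorm {Ω E ι : Type*}
    [MeasurableSpace Ω] {μ : Measure Ω} [NormedAddCommGroup E] [NormedSpace ℝ E] {l : Filter ι}
    {F : ι → Ω → E} (hF : ∀ i, AEStronglyMeasurable (F i) μ)
    (h : Tendsto (fun i => ∫⁻ x, ‖F i x‖ₑ ∂μ) l (𝓝 0)) :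
    (∀ᶠ i in l, Integrable (F i) μ) ∧ Tendsto (fun i => ∫ x, F i x ∂μ) l (𝓝 0) := by
  have hint : ∀ᶠ i in l, Integrable (F i) μ :=
    (h.eventually (gt_mem_nhds zero_lt_one)).mono fun i hi =>
      ⟨hF i, hi.trans ENNReal.one_lt_top⟩
  refine ⟨hint, ?_⟩
  simpa using tendsto_integral_of_L1 (0 : Ω → E) aestronglyMeasurable_const hint
    (by simpa using h)

section Musielak

variable {Ω : Type*} [MeasurableSpace Ω] {μ : Measure Ω} {φ : Ω → ℝ → ℝ}

lemma measurable_complementaryFun (hφ_meas : ∀ t : ℝ, 0 ≤ t → Measurable fun x => φ x t)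
    (hφ_cont : ∀ x : Ω, ContinuousOn (φ x) (Set.Ici 0)) {w : Ω → ℝ} (hw : Measurable w) :
    Measurable fun x => complementaryFun (φ x) (w x) := by
  simp_rw [complementaryFun_eq_iSup_rat (hφ_cont _)]
  exact Measurable.iSup fun q => (hw.mul_const _).sub (hφ_meas _ (le_max_right _ _))

lemma tendsto_lintegral_mul_complementaryFun_div
    (hφ_meas : ∀ t : ℝ, 0 ≤ t → Measurable fun x => φ x t)
    (hφ_nonneg : ∀ x : Ω, ∀ t : ℝ, 0 ≤ t → 0 ≤ φ x t)
    (hφ_cont : ∀ x : Ω, ContinuousOn (φ x) (Set.Ici 0))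
    (hφ_mono : ∀ x : Ω, MonotoneOn (φ x) (Set.Ici 0)) (hφ_zero : ∀ x : Ω, φ x 0 = 0)
    (hφ_pos : ∀ x : Ω, ∀ t : ℝ, 0 < t → 0 < φ x t)
    (hφ_top : ∀ x : Ω, Tendsto (fun t : ℝ => φ x t / t) atTop atTop)
    {w : Ω → ℝ} (hw : Measurable w) (hw0 : ∀ x, 0 ≤ w x)
    (hfin : ∫⁻ x, ENNReal.ofReal (complementaryFun (φ x) (w x)) ∂μ ≠ ∞) :
    Tendsto (fun k : ℕ => ∫⁻ x, ENNReal.ofReal (k * complementaryFun (φ x) (w x / k)) ∂μ)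
      atTop (𝓝 0) := by
  have hmeas : ∀ k : ℕ, Measurable fun x => ENNReal.ofReal (k * complementaryFun (φ x) (w x / k)) :=
    fun k => (measurable_const.mul
      (measurable_complementaryFun hφ_meas hφ_cont (hw.div_const _))).ennreal_ofReal
  have hbound : ∀ᶠ k : ℕ in atTop, ∀ᵐ x ∂μ,
      ENNReal.ofReal (k * complementaryFun (φ x) (w x / k)) ≤
        ENNReal.ofReal (complementaryFun (φ x) (w x)) := by
    filter_upwards [eventually_ge_atTop 1] with k hk
    exact ae_of_all _ fun x => ENNReal.ofReal_le_ofReal <|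
      mul_complementaryFun_div_le (hφ_nonneg x) (hφ_top x) (hw0 x) (by exact_mod_cast hk)
  have hlim : ∀ᵐ x ∂μ, Tendsto (fun k : ℕ => ENNReal.ofReal (k * complementaryFun (φ x) (w x / k)))
      atTop (𝓝 0) := ae_of_all _ fun x => by
    simpa using ENNReal.tendsto_ofReal <|
      (tendsto_mul_complementaryFun_div (hφ_nonneg x) (hφ_zero x) (hφ_pos x) (hφ_mono x)
        (hφ_top x) (hw0 x)).comp tendsto_natCast_atTop_atTop
  simpa using tendsto_lintegral_filter_of_dominated_convergence (f := fun _ => 0) _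
    (Eventually.of_forall hmeas) hbound hfin hlim

lemma lintegral_enorm_mul_le (hφ_meas : ∀ t : ℝ, 0 ≤ t → Measurable fun x => φ x t)
    (hφ_nonneg : ∀ x : Ω, ∀ t : ℝ, 0 ≤ t → 0 ≤ φ x t)
    (hφ_cont : ∀ x : Ω, ContinuousOn (φ x) (Set.Ici 0)) (hφ_zero : ∀ x : Ω, φ x 0 = 0)
    (hφ_top : ∀ x : Ω, Tendsto (fun t : ℝ => φ x t / t) atTop atTop)
    (a : Ω → ℝ) {b : Ω → ℝ} (hb : Measurable b) {lam μ₀ : ℝ} (hlam : 0 < lam) (hμ₀ : 0 < μ₀)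
    {k : ℕ} (hk : 0 < k) :
    ∫⁻ x, ‖a x * b x‖ₑ ∂μ ≤ ENNReal.ofReal (lam * μ₀) *
      (k * ∫⁻ x, ENNReal.ofReal (φ x (|a x| / lam)) ∂μ +
        ∫⁻ x, ENNReal.ofReal (k * complementaryFun (φ x) (|b x| / μ₀ / k)) ∂μ) := by
  have hk' : (0 : ℝ) < k := by exact_mod_cast hk
  have hmeas : Measurable fun x => ENNReal.ofReal (k * complementaryFun (φ x) (|b x| / μ₀ / k)) :=
    (measurable_const.mul
      (measurable_complementaryFun hφ_meas hφ_cont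
        ((hb.abs.div_const _).div_const _))).ennreal_ofReal
  calc ∫⁻ x, ‖a x * b x‖ₑ ∂μ
      ≤ ∫⁻ x, ENNReal.ofReal (lam * μ₀) * (k * ENNReal.ofReal (φ x (|a x| / lam)) +
          ENNReal.ofReal (k * complementaryFun (φ x) (|b x| / μ₀ / k))) ∂μ := by
        refine lintegral_mono fun x => ?_
        rw [Real.enorm_eq_ofReal_abs]
        refine (ENNReal.ofReal_le_ofReal
          (abs_mul_le_young (hφ_nonneg x) (hφ_top x) (a x) (b x) hlam hμ₀ hk')).trans_eq ?_
        rw [ENNReal.ofReal_mul (by positivity),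
          ENNReal.ofReal_add (mul_nonneg hk'.le (hφ_nonneg x _ (by positivity)))
            (mul_nonneg hk'.le
              (complementaryFun_nonneg (hφ_nonneg x) (hφ_top x) (hφ_zero x) (by positivity))),
          ENNReal.ofReal_mul hk'.le, ENNReal.ofReal_natCast]
    _ = _ := by
        rw [lintegral_const_mul' _ _ ENNReal.ofReal_ne_top, lintegral_add_right _ hmeas,
          lintegral_const_mul' _ _ (ENNReal.natCast_ne_top k)]

end Musielak

theorem stmt_1_general {Ω : Type*} [MeasurableSpace Ω] (μ : Measure Ω)
    (φ : Ω → ℝ → ℝ)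
    (hφ_meas : ∀ t : ℝ, 0 ≤ t → Measurable fun x => φ x t)
    (hφ_nonneg : ∀ x : Ω, ∀ t : ℝ, 0 ≤ t → 0 ≤ φ x t)
    (hφ_cont : ∀ x : Ω, ContinuousOn (φ x) (Set.Ici 0))
    (hφ_mono : ∀ x : Ω, MonotoneOn (φ x) (Set.Ici 0))
    (hφ_zero : ∀ x : Ω, φ x 0 = 0)
    (hφ_pos : ∀ x : Ω, ∀ t : ℝ, 0 < t → 0 < φ x t)
    (hφ_limtop : ∀ x : Ω, Tendsto (fun t : ℝ => φ x t / t) atTop atTop)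
    (φconj : Ω → ℝ → ℝ)
    (hφconj : ∀ x : Ω, ∀ s : ℝ,
      φconj x s = sSup {y : ℝ | ∃ t : ℝ, 0 ≤ t ∧ y = s * t - φ x t})
    (u : ℕ → Ω → ℝ) (v : Ω → ℝ)
    (hu_meas : ∀ n, Measurable (u n)) (hv_meas : Measurable v)
    (lam : ℝ) (hlam : 0 < lam)
    (hmod : Tendsto
      (fun n => ∫⁻ x, ENNReal.ofReal (φ x (|u n x - v x| / lam)) ∂μ)
      atTop (nhds 0)) :
    ∀ g : Ω → ℝ, Measurable g →
      (∃ μ₀ : ℝ, 0 < μ₀ ∧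
        ∫⁻ x, ENNReal.ofReal (φconj x (|g x| / μ₀)) ∂μ < ⊤) →
      (∀ᶠ n in atTop, Integrable (fun x => (u n x - v x) * g x) μ) ∧
        Tendsto (fun n => ∫ x, (u n x - v x) * g x ∂μ) atTop (nhds 0) := by
  intro g hg ⟨μ₀, hμ₀, hfin⟩
  obtain rfl : φconj = fun x => complementaryFun (φ x) := funext fun x => funext (hφconj x)
  have hT : Tendsto (fun n => ∫⁻ x, ‖(u n x - v x) * g x‖ₑ ∂μ) atTop (𝓝 0) :=
    ENNReal.tendsto_nhds_zero_of_le_mul_add ENNReal.ofReal_ne_top hmod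
      (tendsto_lintegral_mul_complementaryFun_div hφ_meas hφ_nonneg hφ_cont hφ_mono hφ_zero
        hφ_pos hφ_limtop (hg.abs.div_const μ₀) (fun x => by positivity) hfin.ne)
      fun k hk n => lintegral_enorm_mul_le hφ_meas hφ_nonneg hφ_cont hφ_zero hφ_limtop
        (fun x => u n x - v x) hg hlam hμ₀ hk
  exact eventually_integrable_and_tendsto_integral_of_tendsto_lintegral_enorm
    (fun n => (((hu_meas n).sub hv_meas).mul hg).aestronglyMeasurable) hT

/-- If `φ` is a Musielak function on a σ-finite measure space `Ω` with
complementary function `φ̄(x,s) = sup_{t ≥ 0} (st − φ(x,t))`, and `uₙ → u` in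
the modular sense (`∫ φ(x, |uₙ − u|/λ) dμ → 0` for some `λ > 0`), then for every
measurable `g` with `∫ φ̄(x, |g|/μ₀) dμ < ∞` for some `μ₀ > 0`, the products
`(uₙ − u)·g` are integrable for all sufficiently large `n` and
`∫ (uₙ − u) g dμ → 0`. -/
theorem stmt_1 {Ω : Type*} [MeasurableSpace Ω] (μ : Measure Ω) [SigmaFinite μ]
    (φ : Ω → ℝ → ℝ)
    (hφ_meas : ∀ t : ℝ, 0 ≤ t → Measurable fun x => φ x t)
    (hφ_nonneg : ∀ x : Ω, ∀ t : ℝ, 0 ≤ t → 0 ≤ φ x t)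
    (hφ_conv : ∀ x : Ω, ConvexOn ℝ (Set.Ici 0) (φ x))
    (hφ_cont : ∀ x : Ω, ContinuousOn (φ x) (Set.Ici 0))
    (hφ_mono : ∀ x : Ω, MonotoneOn (φ x) (Set.Ici 0))
    (hφ_zero : ∀ x : Ω, φ x 0 = 0)
    (hφ_pos : ∀ x : Ω, ∀ t : ℝ, 0 < t → 0 < φ x t)
    (hφ_lim0 : ∀ x : Ω,
      Tendsto (fun t : ℝ => φ x t / t) (nhdsWithin 0 (Set.Ioi 0)) (nhds 0))
    (hφ_limtop : ∀ x : Ω, Tendsto (fun t : ℝ => φ x t / t) atTop atTop)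
    (φconj : Ω → ℝ → ℝ)
    (hφconj : ∀ x : Ω, ∀ s : ℝ,
      φconj x s = sSup {y : ℝ | ∃ t : ℝ, 0 ≤ t ∧ y = s * t - φ x t})
    (u : ℕ → Ω → ℝ) (v : Ω → ℝ)
    (hu_meas : ∀ n, Measurable (u n)) (hv_meas : Measurable v)
    (lam : ℝ) (hlam : 0 < lam)
    (hmod : Tendsto
      (fun n => ∫⁻ x, ENNReal.ofReal (φ x (|u n x - v x| / lam)) ∂μ)
      atTop (nhds 0)) :
    ∀ g : Ω → ℝ, Measurable g →
      (∃ μ₀ : ℝ, 0 < μ₀ ∧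
        ∫⁻ x, ENNReal.ofReal (φconj x (|g x| / μ₀)) ∂μ < ⊤) →
      (∀ᶠ n in atTop, Integrable (fun x => (u n x - v x) * g x) μ) ∧
        Tendsto (fun n => ∫ x, (u n x - v x) * g x ∂μ) atTop (nhds 0) :=
  stmt_1_general μ φ hφ_meas hφ_nonneg hφ_cont hφ_mono hφ_zero hφ_pos hφ_limtop φconj hφconj u v
    hu_meas hv_meas lam hlam hmod
end

section
/- Let (Q, μ) be a finite measure space and let φ : Q × [0,∞) → [0,∞) be such that x ↦ φ(x,t) is measurable for each t, for each x the map t ↦ φ(x,t) is convex, continuous and non-decreasing with φ(x,0) = 0, and φ is uniformly superlinear: for every M > 0 there exists t_M > 0 such that φ(x,t) ≥ M t for all t ≥ t_M and all x ∈ Q. Let {ξ_l} be a sequence of measurable functions ξ_l : Q → ℝ and C > 0 a constant such that ∫_Q φ(x, |ξ_l(x)|) dμ ≤ C for all l ∈ ℕ. Then there exist a measurable function ξ : Q → ℝ with ∫_Q φ(x, |ξ(x)|) dμ < ∞ and a subsequence {ξ_{l'}} such that ξ_{l'} converges to ξ weakly in L¹(Q, μ) (i.e. ∫_Q ξ_{l'}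 g dμ → ∫_Q ξ g dμ for every bounded measurable g : Q → ℝ) and ∫_Q φ(x, |ξ(x)|) dμ ≤ liminf_{l'→∞} ∫_Q φ(x, |ξ_{l'}(x)|) dμ. -/
open MeasureTheory Filter

open Topology ENNReal
open MeasureTheory Filter Topology ENNReal

local notation "⟪" x ", " y "⟫" => @inner ℝ _ _ x y

lemma aux_weak_limit {H : Type*} [NormedAddCommGroup H] [InnerProductSpace ℝ H]
    [CompleteSpace H] {f : ℕ → H} {B : ℝ} (hB : ∀ n, ‖f n‖ ≤ B) {d : ℕ → H}
    (hd : DenseRange d) (hconv : ∀ j, ∃ r, Tendsto (fun n => ⟪f n, d j⟫) atTop (𝓝 r)) :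
    ∃ z : H, ∀ y : H, Tendsto (fun n => ⟪f n, y⟫) atTop (𝓝 ⟪z, y⟫) := by
  have hB0 : 0 ≤ B := le_trans (norm_nonneg _) (hB 0)
  -- every inner sequence is Cauchy
  have hcauchy : ∀ y : H, CauchySeq fun n => ⟪f n, y⟫ := by
    intro y
    rw [Metric.cauchySeq_iff]
    intro ε hε
    obtain ⟨j, hj⟩ := Metric.denseRange_iff.mp hd y (ε / (4 * (B + 1)))
      (by positivity)
    obtain ⟨r, hr⟩ := hconv j
    have hc : CauchySeq fun n => ⟪f n, d j⟫ := hr.cauchySeq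
    rw [Metric.cauchySeq_iff] at hc
    obtain ⟨N, hN⟩ := hc (ε / 2) (by positivity)
    refine ⟨N, fun m hm n hn => ?_⟩
    have key : ∀ k, |⟪f k, y⟫ - ⟪f k, d j⟫| ≤ ε / 4 := by
      intro k
      rw [← inner_sub_right]
      calc |⟪f k, y - d j⟫| ≤ ‖f k‖ * ‖y - d j‖ := abs_real_inner_le_norm _ _
        _ ≤ (B + 1) * (ε / (4 * (B + 1))) := by
            apply mul_le_mul (le_trans (hB k) (by linarith)) ?_ (norm_nonneg _) (by linarith)
            rw [← dist_eq_norm, dist_comm]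
            exact le_of_lt (by rwa [dist_comm])
        _ = ε / 4 := by field_simp
    have h1 := key m; have h2 := key n
    have h3 : |⟪f m, d j⟫ - ⟪f n, d j⟫| < ε / 2 := by
      have := hN m hm n hn; rwa [Real.dist_eq] at this
    rw [Real.dist_eq]
    calc |⟪f m, y⟫ - ⟪f n, y⟫|
        = |(⟪f m, y⟫ - ⟪f m, d j⟫) + (⟪f m, d j⟫ - ⟪f n, d j⟫) + (⟪f n, d j⟫ - ⟪f n, y⟫)| := by
          ring_nf
      _ ≤ |⟪f m, y⟫ - ⟪f m, d j⟫| + |⟪f m, d j⟫ - ⟪f n, d j⟫| + |⟪f n, d j⟫ - ⟪f n, y⟫| :=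
          (abs_add_three _ _ _)
      _ < ε / 4 + ε / 2 + ε / 4 := by
          refine add_lt_add_of_lt_of_le (add_lt_add_of_le_of_lt h1 h3) ?_
          rw [abs_sub_comm]; exact h2
      _ = ε := by ring
  have hlim : ∀ y : H, ∃ r, Tendsto (fun n => ⟪f n, y⟫) atTop (𝓝 r) :=
    fun y => cauchySeq_tendsto_of_complete (hcauchy y)
  choose Φ hΦ using hlim
  have hadd : ∀ y z : H, Φ (y + z) = Φ y + Φ z := by
    intro y z
    refine tendsto_nhds_unique ?_ ((hΦ y).add (hΦ z))
    have heq : (fun n => ⟪f n, y + z⟫) = fun n => ⟪f n, y⟫ + ⟪f n, z⟫ := by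
      funext n; rw [inner_add_right]
    rw [← heq]
    exact hΦ (y + z)
  have hsmul : ∀ (c : ℝ) (y : H), Φ (c • y) = c * Φ y := by
    intro c y
    refine tendsto_nhds_unique ?_ ((hΦ y).const_mul c)
    have heq : (fun n => ⟪f n, c • y⟫) = fun n => c * ⟪f n, y⟫ := by
      funext n; rw [real_inner_smul_right]
    rw [← heq]
    exact hΦ (c • y)
  have hbound : ∀ y : H, ‖Φ y‖ ≤ B * ‖y‖ := by
    intro y
    rw [Real.norm_eq_abs]
    have h1 : ∀ n, |⟪f n, y⟫| ≤ B * ‖y‖ := fun n =>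
      le_trans (abs_real_inner_le_norm _ _)
        (mul_le_mul_of_nonneg_right (hB n) (norm_nonneg _))
    have h2 : Tendsto (fun n => |⟪f n, y⟫|) atTop (𝓝 |Φ y|) := (hΦ y).abs
    exact le_of_tendsto h2 (Filter.Eventually.of_forall h1)
  set L : H →ₗ[ℝ] ℝ :=
    { toFun := Φ
      map_add' := hadd
      map_smul' := hsmul }
  set Lc : H →L[ℝ] ℝ := LinearMap.mkContinuousOfExistsBound L ⟨B, hbound⟩
  refine ⟨(InnerProductSpace.toDual ℝ H).symm Lc, fun y => ?_⟩
  have : ⟪(InnerProductSpace.toDual ℝ H).symm Lc, y⟫ = Lc y :=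
    InnerProductSpace.toDual_symm_apply
  rw [this]
  exact hΦ y

lemma aux_mazur {H : Type*} [NormedAddCommGroup H] [InnerProductSpace ℝ H]
    [CompleteSpace H] {f : ℕ → H} {z : H}
    (hw : ∀ y : H, Tendsto (fun n => ⟪f n, y⟫) atTop (𝓝 ⟪z, y⟫)) (K : ℕ) :
    z ∈ closure (convexHull ℝ (Set.range fun k => f (K + k))) := by
  by_contra hct
  obtain ⟨l, u, hlt, hgt⟩ := geometric_hahn_banach_closed_point
    ((convex_convexHull ℝ _).closure) isClosed_closure hct
  set y : H := (InnerProductSpace.toDual ℝ H).symm l with hy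
  have hly : ∀ v : H, l v = ⟪v, y⟫ := by
    intro v
    rw [hy, real_inner_comm]
    exact (InnerProductSpace.toDual_symm_apply).symm
  have h1 : Tendsto (fun k => ⟪f (K + k), y⟫) atTop (𝓝 ⟪z, y⟫) := by
    have := (hw y).comp (tendsto_add_atTop_nat K)
    simpa [Function.comp_def, Nat.add_comm] using this
  have h2 : ∀ k, ⟪f (K + k), y⟫ ≤ u := by
    intro k
    rw [← hly]
    exact (hlt _ (subset_closure (subset_convexHull ℝ _ ⟨k, rfl⟩))).le
  have h3 : ⟪z, y⟫ ≤ u := le_of_tendsto h1 (Filter.Eventually.of_forall h2)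
  rw [← hly] at h3
  exact absurd h3 (not_le.mpr hgt)

lemma aux_phi_meas {Q : Type*} [MeasurableSpace Q] (φ : Q → ℝ → ℝ)
    (hφ_meas : ∀ t : ℝ, 0 ≤ t → Measurable fun x => φ x t)
    (hφ_cont : ∀ x : Q, ContinuousOn (φ x) (Set.Ici 0))
    {f : Q → ℝ} (hf : Measurable f) : Measurable fun x => φ x |f x| := by
  set ψ : ℝ → Q → ℝ := fun t x => φ x (max t 0) with hψ
  have hcont : ∀ x, Continuous fun t => ψ t x := by
    intro x
    refine (hφ_cont x).comp_continuous (continuous_id.max continuous_const) ?_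
    exact fun t => le_max_right t 0
  have hm : ∀ t, Measurable (ψ t) := fun t => hφ_meas (max t 0) (le_max_right t 0)
  have h1 : Measurable (Function.uncurry ψ) :=
    measurable_uncurry_of_continuous_of_measurable (u := ψ) hcont hm
  have h2 : (fun x => φ x |f x|) = Function.uncurry ψ ∘ fun x => (|f x|, x) := by
    funext x
    simp [Function.uncurry, ψ, max_eq_left (abs_nonneg (f x))]
  rw [h2]
  exact h1.comp (hf.abs.prodMk measurable_id)

lemma aux_phi_aemeas {Q : Type*} [MeasurableSpace Q] {μ : Measure Q} (φ : Q → ℝ → ℝ)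
    (hφ_meas : ∀ t : ℝ, 0 ≤ t → Measurable fun x => φ x t)
    (hφ_cont : ∀ x : Q, ContinuousOn (φ x) (Set.Ici 0))
    {f : Q → ℝ} (hf : AEMeasurable f μ) :
    AEMeasurable (fun x => φ x |f x|) μ := by
  refine ⟨fun x => φ x |hf.mk f x|,
    aux_phi_meas φ hφ_meas hφ_cont hf.measurable_mk, ?_⟩
  filter_upwards [hf.ae_eq_mk] with x hx
  rw [hx]

lemma aux_modular_combo {Q : Type*} [MeasurableSpace Q] (μ : Measure Q) (φ : Q → ℝ → ℝ)
    (hφ_nonneg : ∀ x : Q, ∀ t : ℝ, 0 ≤ t → 0 ≤ φ x t)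
    (hφ_conv : ∀ x : Q, ConvexOn ℝ (Set.Ici 0) (φ x))
    (hφ_mono : ∀ x : Q, MonotoneOn (φ x) (Set.Ici 0))
    {ι : Type*} (t : Finset ι) (w : ι → ℝ) (gn : ι → Q → ℝ)
    (hw0 : ∀ i ∈ t, 0 ≤ w i) (hw1 : ∑ i ∈ t, w i = 1)
    (hmeas : ∀ i ∈ t, Measurable fun x => φ x |gn i x|)
    {A : ℝ≥0∞} (hA : ∀ i ∈ t, ∫⁻ x, ENNReal.ofReal (φ x |gn i x|) ∂μ ≤ A) :
    ∫⁻ x, ENNReal.ofReal (φ x |∑ i ∈ t, w i * gn i x|) ∂μ ≤ A := by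
  have hpt : ∀ x, φ x |∑ i ∈ t, w i * gn i x| ≤ ∑ i ∈ t, w i * φ x |gn i x| := by
    intro x
    have habs : |∑ i ∈ t, w i * gn i x| ≤ ∑ i ∈ t, w i * |gn i x| := by
      refine le_trans (Finset.abs_sum_le_sum_abs _ _) (Finset.sum_le_sum fun i hi => ?_)
      rw [abs_mul, abs_of_nonneg (hw0 i hi)]
    have hmem : ∑ i ∈ t, w i * |gn i x| ∈ Set.Ici (0:ℝ) :=
      Finset.sum_nonneg fun i hi => mul_nonneg (hw0 i hi) (abs_nonneg _)
    have h1 : φ x |∑ i ∈ t, w i * gn i x| ≤ φ x (∑ i ∈ t, w i * |gn i x|) :=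
      hφ_mono x (Set.mem_Ici.mpr (abs_nonneg _)) hmem habs
    have h2 : φ x (∑ i ∈ t, w i • |gn i x|) ≤ ∑ i ∈ t, w i • φ x |gn i x| :=
      (hφ_conv x).map_sum_le hw0 hw1 (fun i _ => Set.mem_Ici.mpr (abs_nonneg _))
    simpa [smul_eq_mul] using le_trans h1 h2
  calc ∫⁻ x, ENNReal.ofReal (φ x |∑ i ∈ t, w i * gn i x|) ∂μ
      ≤ ∫⁻ x, ENNReal.ofReal (∑ i ∈ t, w i * φ x |gn i x|) ∂μ :=
        lintegral_mono fun x => ENNReal.ofReal_le_ofReal (hpt x)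
    _ = ∫⁻ x, ∑ i ∈ t, ENNReal.ofReal (w i * φ x |gn i x|) ∂μ := by
        refine lintegral_congr fun x => ?_
        exact ENNReal.ofReal_sum_of_nonneg fun i hi =>
          mul_nonneg (hw0 i hi) (hφ_nonneg x _ (abs_nonneg _))
    _ = ∑ i ∈ t, ∫⁻ x, ENNReal.ofReal (w i * φ x |gn i x|) ∂μ := by
        refine lintegral_finset_sum _ fun i hi => ?_
        exact ENNReal.measurable_ofReal.comp ((measurable_const.mul (hmeas i hi)))
    _ ≤ ∑ i ∈ t, ENNReal.ofReal (w i) * A := by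
        refine Finset.sum_le_sum fun i hi => ?_
        have : ∀ x, ENNReal.ofReal (w i * φ x |gn i x|) =
            ENNReal.ofReal (w i) * ENNReal.ofReal (φ x |gn i x|) := fun x =>
          ENNReal.ofReal_mul (hw0 i hi)
        simp_rw [this]
        rw [lintegral_const_mul' _ _ ENNReal.ofReal_ne_top]
        exact _root_.mul_le_mul_right (hA i hi) _
    _ = A := by
        rw [← Finset.sum_mul, ← ENNReal.ofReal_sum_of_nonneg hw0, hw1]
        simp

lemma aux_modular_fatou {Q : Type*} [MeasurableSpace Q] (μ : Measure Q) (φ : Q → ℝ → ℝ)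
    (hφ_meas : ∀ t : ℝ, 0 ≤ t → Measurable fun x => φ x t)
    (hφ_cont : ∀ x : Q, ContinuousOn (φ x) (Set.Ici 0))
    {h : Q → ℝ} {c : ℕ → Q → ℝ}
    (hc : ∀ᵐ x ∂μ, Tendsto (fun j => c j x) atTop (𝓝 (h x)))
    (hcm : ∀ j, AEMeasurable (c j) μ)
    {A : ℝ≥0∞} (hA : ∀ j, ∫⁻ x, ENNReal.ofReal (φ x |c j x|) ∂μ ≤ A) :
    ∫⁻ x, ENNReal.ofReal (φ x |h x|) ∂μ ≤ A := by
  have hpt : ∀ᵐ x ∂μ, ENNReal.ofReal (φ x |h x|) =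
      liminf (fun j => ENNReal.ofReal (φ x |c j x|)) atTop := by
    filter_upwards [hc] with x hx
    have habs : Tendsto (fun j => |c j x|) atTop (𝓝 |h x|) := hx.abs
    have habs' : Tendsto (fun j => |c j x|) atTop (𝓝[Set.Ici 0] |h x|) :=
      tendsto_nhdsWithin_of_tendsto_nhds_of_eventually_within _ habs
        (Filter.Eventually.of_forall fun j => Set.mem_Ici.mpr (abs_nonneg _))
    have hφt : Tendsto (fun j => φ x |c j x|) atTop (𝓝 (φ x |h x|)) :=
      ((hφ_cont x |h x| (Set.mem_Ici.mpr (abs_nonneg _))).tendsto).comp habs'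
    have := (ENNReal.continuous_ofReal.tendsto _).comp hφt
    exact (this.liminf_eq).symm
  calc ∫⁻ x, ENNReal.ofReal (φ x |h x|) ∂μ
      = ∫⁻ x, liminf (fun j => ENNReal.ofReal (φ x |c j x|)) atTop ∂μ :=
        lintegral_congr_ae hpt
    _ ≤ liminf (fun j => ∫⁻ x, ENNReal.ofReal (φ x |c j x|) ∂μ) atTop := by
        refine lintegral_liminf_le' fun j => ?_
        exact ENNReal.measurable_ofReal.comp_aemeasurable
          (aux_phi_aemeas φ hφ_meas hφ_cont (hcm j))
    _ ≤ A := by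
        refine liminf_le_of_frequently_le ?_ (by isBoundedDefault)
        exact Filter.Frequently.of_forall fun j => hA j

set_option linter.unusedSectionVars false
section Trunc
variable {Q : Type*} [MeasurableSpace Q]

noncomputable def trunc (R : ℝ) (f : Q → ℝ) : Q → ℝ := fun x => min R (max (-R) (f x))

lemma trunc_measurable {R : ℝ} {f : Q → ℝ} (hf : Measurable f) : Measurable (trunc R f) :=
  measurable_const.min (measurable_const.max hf)

lemma abs_trunc_le_R {R : ℝ} (hR : 0 ≤ R) (f : Q → ℝ) (x : Q) : |trunc R f x| ≤ R := by
  rw [abs_le]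
  constructor
  · exact le_min (neg_le_self hR) (le_max_left _ _)
  · exact min_le_left _ _

lemma abs_trunc_le_abs {R : ℝ} (hR : 0 ≤ R) (f : Q → ℝ) (x : Q) : |trunc R f x| ≤ |f x| := by
  rw [abs_le]
  rcases le_total 0 (f x) with h | h
  · constructor
    · refine le_min ?_ ?_
      · linarith [abs_nonneg (f x)]
      · calc -|f x| ≤ 0 := by linarith [abs_nonneg (f x)]
          _ ≤ f x := h
          _ ≤ max (-R) (f x) := le_max_right _ _
    · calc trunc R f x ≤ max (-R) (f x) := min_le_right _ _
        _ ≤ |f x| := max_le (by linarith [abs_nonneg (f x)]) (le_abs_self _)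
  · constructor
    · refine le_min (by linarith [abs_nonneg (f x)]) ?_
      have : -|f x| = f x := by rw [abs_of_nonpos h]; ring
      rw [this]
      exact le_max_right _ _
    · calc trunc R f x ≤ max (-R) (f x) := min_le_right _ _
        _ ≤ |f x| := max_le (by rw [abs_of_nonpos h]; linarith) (by rw [abs_of_nonpos h]; linarith)

lemma trunc_eq_of_abs_le {R : ℝ} {f : Q → ℝ} {x : Q} (h : |f x| ≤ R) : trunc R f x = f x := by
  rw [abs_le] at h
  rw [trunc, max_eq_right h.1, min_eq_right h.2]

lemma abs_sub_trunc_le {R : ℝ} (hR : 0 ≤ R) (f : Q → ℝ) (x : Q) :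
    |f x - trunc R f x| ≤ if R < |f x| then |f x| else 0 := by
  rcases le_or_gt (|f x|) R with h | h
  · rw [trunc_eq_of_abs_le h, sub_self, abs_zero]
    simp [not_lt.mpr h]
  · rw [if_pos h]
    rw [abs_le] at *
    rcases le_total 0 (f x) with h0 | h0
    · have hfR : R < f x := by rwa [abs_of_nonneg h0] at h
      have : trunc R f x = R := by
        rw [trunc, max_eq_right (by linarith), min_eq_left hfR.le]
      rw [this, abs_of_nonneg h0]
      constructor <;> nlinarith
    · have hfR : f x < -R := by rw [abs_of_nonpos h0] at h; linarith
      have : trunc R f x = -R := by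
        rw [trunc, max_eq_left hfR.le, min_eq_right (by linarith)]
      rw [this, abs_of_nonpos h0]
      constructor <;> nlinarith

end Trunc

section Tail
variable {Q : Type*} [MeasurableSpace Q] {μ : MeasureTheory.Measure Q}
open MeasureTheory Filter Topology ENNReal

lemma aux_integrable_phi (φ : Q → ℝ → ℝ)
    (hφ_meas : ∀ t : ℝ, 0 ≤ t → Measurable fun x => φ x t)
    (hφ_nonneg : ∀ x : Q, ∀ t : ℝ, 0 ≤ t → 0 ≤ φ x t)
    (hφ_cont : ∀ x : Q, ContinuousOn (φ x) (Set.Ici 0))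
    {f : Q → ℝ} (hf : Measurable f) {C : ℝ}
    (hint : ∫⁻ x, ENNReal.ofReal (φ x |f x|) ∂μ ≤ ENNReal.ofReal C) :
    Integrable (fun x => φ x |f x|) μ := by
  have hFm : Measurable fun x => φ x |f x| := aux_phi_meas φ hφ_meas hφ_cont hf
  refine ⟨hFm.aestronglyMeasurable, ?_⟩
  rw [hasFiniteIntegral_iff_ofReal
    (Filter.Eventually.of_forall fun x => hφ_nonneg x _ (abs_nonneg _))]
  exact lt_of_le_of_lt hint ENNReal.ofReal_lt_top

lemma aux_integral_phi_le (φ : Q → ℝ → ℝ)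
    (hφ_nonneg : ∀ x : Q, ∀ t : ℝ, 0 ≤ t → 0 ≤ φ x t)
    {f : Q → ℝ} (hf : Measurable f)
    (hFm : Measurable fun x => φ x |f x|) {C : ℝ} (hC : 0 ≤ C)
    (hint : ∫⁻ x, ENNReal.ofReal (φ x |f x|) ∂μ ≤ ENNReal.ofReal C) :
    ∫ x, φ x |f x| ∂μ ≤ C := by
  rw [integral_eq_lintegral_of_nonneg_ae
    (Filter.Eventually.of_forall fun x => hφ_nonneg x _ (abs_nonneg _))
    hFm.aestronglyMeasurable]
  exact ENNReal.toReal_le_of_le_ofReal hC hint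

lemma aux_tail (φ : Q → ℝ → ℝ)
    (hφ_meas : ∀ t : ℝ, 0 ≤ t → Measurable fun x => φ x t)
    (hφ_nonneg : ∀ x : Q, ∀ t : ℝ, 0 ≤ t → 0 ≤ φ x t)
    (hφ_cont : ∀ x : Q, ContinuousOn (φ x) (Set.Ici 0))
    {f : Q → ℝ} (hf : Measurable f) {C : ℝ} (hC : 0 ≤ C)
    (hint : ∫⁻ x, ENNReal.ofReal (φ x |f x|) ∂μ ≤ ENNReal.ofReal C)
    {M tM R : ℝ} (hM : 0 < M)
    (hsup : ∀ x : Q, ∀ t : ℝ, tM ≤ t → M * t ≤ φ x t)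
    (hR : tM ≤ R) (hR0 : 0 ≤ R) :
    ∫ x, |f x - trunc R f x| ∂μ ≤ C / M := by
  have hFm : Measurable fun x => φ x |f x| := aux_phi_meas φ hφ_meas hφ_cont hf
  have hFi : Integrable (fun x => φ x |f x|) μ :=
    aux_integrable_phi φ hφ_meas hφ_nonneg hφ_cont hf hint
  have hptw : ∀ x, |f x - trunc R f x| ≤ φ x |f x| / M := by
    intro x
    have h1 := abs_sub_trunc_le hR0 f x
    by_cases h : R < |f x|
    · rw [if_pos h] at h1
      refine le_trans h1 ?_
      rw [le_div_iff₀ hM, mul_comm]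
      exact hsup x _ (le_trans hR h.le)
    · rw [if_neg h] at h1
      refine le_trans h1 ?_
      have := hφ_nonneg x _ (abs_nonneg (f x)); positivity
  have hint2 : Integrable (fun x => φ x |f x| / M) μ := hFi.div_const M
  calc ∫ x, |f x - trunc R f x| ∂μ ≤ ∫ x, φ x |f x| / M ∂μ :=
        integral_mono_of_nonneg (Filter.Eventually.of_forall fun x => abs_nonneg _)
          hint2 (Filter.Eventually.of_forall hptw)
    _ = (∫ x, φ x |f x| ∂μ) / M := integral_div M _
    _ ≤ C / M := by
        gcongr
        exact aux_integral_phi_le φ hφ_nonneg hf hFm hC hint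

lemma aux_integrable [IsFiniteMeasure μ] (φ : Q → ℝ → ℝ)
    (hφ_meas : ∀ t : ℝ, 0 ≤ t → Measurable fun x => φ x t)
    (hφ_nonneg : ∀ x : Q, ∀ t : ℝ, 0 ≤ t → 0 ≤ φ x t)
    (hφ_cont : ∀ x : Q, ContinuousOn (φ x) (Set.Ici 0))
    {f : Q → ℝ} (hf : Measurable f) {C : ℝ}
    (hint : ∫⁻ x, ENNReal.ofReal (φ x |f x|) ∂μ ≤ ENNReal.ofReal C)
    {t1 : ℝ} (ht1 : 0 < t1)
    (hsup : ∀ x : Q, ∀ t : ℝ, t1 ≤ t → 1 * t ≤ φ x t) :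
    Integrable f μ := by
  have hFi : Integrable (fun x => φ x |f x|) μ :=
    aux_integrable_phi φ hφ_meas hφ_nonneg hφ_cont hf hint
  refine Integrable.mono' ((integrable_const t1).add hFi) hf.aestronglyMeasurable
    (Filter.Eventually.of_forall fun x => ?_)
  rw [Real.norm_eq_abs]
  show |f x| ≤ t1 + φ x |f x|
  by_cases h : |f x| ≤ t1
  · have := hφ_nonneg x _ (abs_nonneg (f x)); linarith
  · push_neg at h
    have := hsup x _ h.le
    linarith
end Tail

section LpCombo
open MeasureTheory Filter Topology ENNReal
variable {Q : Type*} [MeasurableSpace Q] {μ : MeasureTheory.Measure Q}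

lemma aux_coeFn_sum {ι : Type*} (t : Finset ι) (w : ι → ℝ) (u : ι → Lp ℝ 2 μ) :
    (((∑ i ∈ t, w i • u i : Lp ℝ 2 μ)) : Q → ℝ) =ᵐ[μ]
      fun x => ∑ i ∈ t, w i * (u i : Q → ℝ) x := by
  classical
  induction t using Finset.induction_on with
  | empty => simp only [Finset.sum_empty]; exact Lp.coeFn_zero (E := ℝ) (p := 2) (μ := μ)
  | insert a tt hnot ih =>
      rw [Finset.sum_insert hnot]
      have h1 := Lp.coeFn_add (w a • u a) (∑ i ∈ tt, w i • u i)
      have h2 := Lp.coeFn_smul (w a) (u a)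
      filter_upwards [h1, h2, ih] with x hx1 hx2 hx3
      rw [hx1]
      simp only [Pi.add_apply]
      rw [hx2, hx3, Finset.sum_insert hnot]
      simp [smul_eq_mul]

lemma aux_modular_combo_Lp (φ : Q → ℝ → ℝ)
    (hφ_nonneg : ∀ x : Q, ∀ t : ℝ, 0 ≤ t → 0 ≤ φ x t)
    (hφ_conv : ∀ x : Q, ConvexOn ℝ (Set.Ici 0) (φ x))
    (hφ_mono : ∀ x : Q, MonotoneOn (φ x) (Set.Ici 0))
    {ι : Type*} (t : Finset ι) (w : ι → ℝ) (u : ι → Lp ℝ 2 μ)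
    (hw0 : ∀ i ∈ t, 0 ≤ w i) (hw1 : ∑ i ∈ t, w i = 1) {A : ℝ≥0∞}
    (hu : ∀ i ∈ t, ∃ g : Q → ℝ, Measurable g ∧ (((u i : Q → ℝ)) =ᵐ[μ] g) ∧
      (Measurable fun x => φ x |g x|) ∧ ∫⁻ x, ENNReal.ofReal (φ x |g x|) ∂μ ≤ A) :
    ∫⁻ x, ENNReal.ofReal (φ x |((∑ i ∈ t, w i • u i : Lp ℝ 2 μ) : Q → ℝ) x|) ∂μ ≤ A := by
  classical
  have hu' : ∀ i : ι, ∃ g : Q → ℝ, Measurable g ∧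
      (i ∈ t → (((u i : Q → ℝ)) =ᵐ[μ] g) ∧ (Measurable fun x => φ x |g x|) ∧
        ∫⁻ x, ENNReal.ofReal (φ x |g x|) ∂μ ≤ A) := by
    intro i
    by_cases h : i ∈ t
    · obtain ⟨g, hg1, hg2, hg3, hg4⟩ := hu i h
      exact ⟨g, hg1, fun _ => ⟨hg2, hg3, hg4⟩⟩
    · exact ⟨0, measurable_const, fun hh => absurd hh h⟩
  choose g hgm hgp using hu'
  have hae : (((∑ i ∈ t, w i • u i : Lp ℝ 2 μ)) : Q → ℝ) =ᵐ[μ]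
      fun x => ∑ i ∈ t, w i * g i x := by
    have h1 := aux_coeFn_sum t w u
    have h2 : ∀ᵐ x ∂μ, ∀ i ∈ t, (u i : Q → ℝ) x = g i x := by
      rw [Filter.eventually_all_finset]
      exact fun i hi => (hgp i hi).1
    filter_upwards [h1, h2] with x hx1 hx2
    rw [hx1]
    exact Finset.sum_congr rfl fun i hi => by rw [hx2 i hi]
  calc ∫⁻ x, ENNReal.ofReal (φ x |((∑ i ∈ t, w i • u i : Lp ℝ 2 μ) : Q → ℝ) x|) ∂μ
      = ∫⁻ x, ENNReal.ofReal (φ x |∑ i ∈ t, w i * g i x|) ∂μ := by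
        refine lintegral_congr_ae ?_
        filter_upwards [hae] with x hx
        rw [hx]
    _ ≤ A := aux_modular_combo μ φ hφ_nonneg hφ_conv hφ_mono t w g hw0 hw1
        (fun i hi => (hgp i hi).2.1) (fun i hi => (hgp i hi).2.2)

end LpCombo
noncomputable def sigmaAux {Q : Type*} (T : Q → ℕ → ℝ) : MeasurableSpace Q :=
  MeasurableSpace.comap T MeasurableSpace.pi

set_option maxHeartbeats 2000000 in
set_option synthInstance.maxHeartbeats 400000 in
/-- Let `(Q,μ)` be a finite measure space and `φ` a measurable-in-`x`, convex,
continuous, non-decreasing (in `t`) integrand with `φ(x,0) = 0` which is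
uniformly superlinear. If `∫ φ(x,|ξ_l|) dμ ≤ C` for all `l`, then there exist a
measurable `ξ` with finite modular and a subsequence converging to `ξ` weakly in
`L¹(Q,μ)`, with `∫ φ(x,|ξ|) dμ ≤ liminf ∫ φ(x,|ξ_{l'}|) dμ`. -/
theorem stmt_2 {Q : Type*} [MeasurableSpace Q] (μ : Measure Q) [IsFiniteMeasure μ]
    (φ : Q → ℝ → ℝ)
    (hφ_meas : ∀ t : ℝ, 0 ≤ t → Measurable fun x => φ x t)
    (hφ_nonneg : ∀ x : Q, ∀ t : ℝ, 0 ≤ t → 0 ≤ φ x t)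
    (hφ_conv : ∀ x : Q, ConvexOn ℝ (Set.Ici 0) (φ x))
    (hφ_cont : ∀ x : Q, ContinuousOn (φ x) (Set.Ici 0))
    (hφ_mono : ∀ x : Q, MonotoneOn (φ x) (Set.Ici 0))
    (hφ_zero : ∀ x : Q, φ x 0 = 0)
    (hφ_superlin : ∀ M : ℝ, 0 < M → ∃ tM : ℝ, 0 < tM ∧
      ∀ x : Q, ∀ t : ℝ, tM ≤ t → M * t ≤ φ x t)
    (ξ : ℕ → Q → ℝ) (hξ_meas : ∀ l, Measurable (ξ l))
    (C : ℝ) (hC : 0 < C)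
    (hbound : ∀ l : ℕ,
      ∫⁻ x, ENNReal.ofReal (φ x |ξ l x|) ∂μ ≤ ENNReal.ofReal C) :
    ∃ ξ₀ : Q → ℝ, Measurable ξ₀ ∧
      (∫⁻ x, ENNReal.ofReal (φ x |ξ₀ x|) ∂μ < ⊤) ∧
      ∃ l' : ℕ → ℕ, StrictMono l' ∧
        (∀ g : Q → ℝ, Measurable g → (∃ M : ℝ, ∀ x, |g x| ≤ M) →
          Tendsto (fun k => ∫ x, ξ (l' k) x * g x ∂μ) atTop
            (nhds (∫ x, ξ₀ x * g x ∂μ))) ∧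
        ∫⁻ x, ENNReal.ofReal (φ x |ξ₀ x|) ∂μ ≤
          liminf (fun k => ∫⁻ x, ENNReal.ofReal (φ x |ξ (l' k) x|) ∂μ) atTop := by
  classical
  have hC0 : (0:ℝ) ≤ C := hC.le
  -- step 0 : extract subsequence with convergent moduli
  obtain ⟨L, -, s₀, hs₀, hL₀⟩ := isCompact_univ.tendsto_subseq
    (x := fun l => ∫⁻ x, ENNReal.ofReal (φ x |ξ l x|) ∂μ) (fun n => Set.mem_univ _)
  set ξ' : ℕ → Q → ℝ := fun k => ξ (s₀ k) with hξ'
  have hξ'_meas : ∀ k, Measurable (ξ' k) := fun k => hξ_meas _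
  have hbound' : ∀ k, ∫⁻ x, ENNReal.ofReal (φ x |ξ' k x|) ∂μ ≤ ENNReal.ofReal C :=
    fun k => hbound _
  have hL : Tendsto (fun k => ∫⁻ x, ENNReal.ofReal (φ x |ξ' k x|) ∂μ) atTop (𝓝 L) := hL₀
  have hL_le : L ≤ ENNReal.ofReal C :=
    le_of_tendsto hL (Filter.Eventually.of_forall hbound')
  have hL_top : L ≠ ⊤ := (lt_of_le_of_lt hL_le ENNReal.ofReal_lt_top).ne
  -- the countably generated sub-σ-algebra
  set T : Q → (ℕ → ℝ) := fun x l => ξ' l x with hT_def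
  have hT : Measurable T := measurable_pi_lambda _ fun l => hξ'_meas l
  have hm : sigmaAux T ≤ _ := hT.comap_le
  haveI hFact := Fact.mk hm
  haveI hcg : @MeasurableSpace.CountablyGenerated Q (sigmaAux T) :=
    MeasurableSpace.CountablyGenerated.comap T
  have hTm : @Measurable Q (ℕ → ℝ) (sigmaAux T) _ T := fun s hs => ⟨s, hs, rfl⟩
  have hξ'm : ∀ k, @Measurable Q ℝ (sigmaAux T) _ (ξ' k) := fun k =>
    (measurable_pi_apply k).comp hTm
  haveI hfin_trim : @IsFiniteMeasure Q (sigmaAux T) (μ.trim hm) := isFiniteMeasure_trim hm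
  haveI hp2 : Fact ((1:ℝ≥0∞) ≤ 2) := ⟨one_le_two⟩
  haveI hp2' : Fact ((2:ℝ≥0∞) ≠ ⊤) := ⟨by norm_num⟩
  -- the Hilbert space H of m-measurable L² functions
  haveI : CompleteSpace (lpMeas ℝ ℝ (sigmaAux T) 2 μ) := inferInstance
  haveI hsepH : TopologicalSpace.SeparableSpace (lpMeas ℝ ℝ (sigmaAux T) 2 μ) := by
    have e := lpMeasToLpTrimLie ℝ ℝ 2 μ hm
    exact (e.symm.surjective.denseRange).separableSpace e.symm.continuous
  obtain ⟨d, hd⟩ := TopologicalSpace.exists_dense_seq (lpMeas ℝ ℝ (sigmaAux T) 2 μ)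
  -- truncated elements of H
  have htm : ∀ (l : ℕ) (R : ℝ), @Measurable Q ℝ (sigmaAux T) _ (trunc R (ξ' l)) := fun l R =>
    Measurable.min measurable_const (Measurable.max measurable_const (hξ'm l))
  have hmemLp : ∀ (l : ℕ) (R : ℝ), 0 ≤ R → MemLp (trunc R (ξ' l)) 2 μ := fun l R hR =>
    MemLp.of_bound ((trunc_measurable (hξ'_meas l))).aestronglyMeasurable R
      (Filter.Eventually.of_forall fun x => by
        rw [Real.norm_eq_abs]; exact abs_trunc_le_R hR _ x)
  have hNnn : ∀ N : ℕ, (0:ℝ) ≤ N := fun N => Nat.cast_nonneg N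
  set FH : ℕ → ℕ → lpMeas ℝ ℝ (sigmaAux T) 2 μ := fun l N =>
    ⟨(hmemLp l N (hNnn N)).toLp _, by
      rw [mem_lpMeas_iff_aestronglyMeasurable]
      exact ⟨trunc (N:ℝ) (ξ' l), (htm l N).stronglyMeasurable,
        (hmemLp l N (hNnn N)).coeFn_toLp⟩⟩ with hFH
  have hFH_ae : ∀ l N, ((FH l N : Lp ℝ 2 μ) : Q → ℝ) =ᵐ[μ] trunc (N:ℝ) (ξ' l) := fun l N =>
    (hmemLp l N (hNnn N)).coeFn_toLp
  set Bc : ℝ := (μ Set.univ ^ (2:ℝ≥0∞).toReal⁻¹).toReal with hBc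
  have hFH_norm : ∀ l N, ‖(FH l N : Lp ℝ 2 μ)‖ ≤ Bc * N := by
    intro l N
    have h1 : ‖(FH l N : Lp ℝ 2 μ)‖ = (eLpNorm (trunc (N:ℝ) (ξ' l)) 2 μ).toReal := by
      rw [hFH]; exact Lp.norm_toLp _ (hmemLp l N (hNnn N))
    rw [h1]
    have h2 : eLpNorm (trunc (N:ℝ) (ξ' l)) 2 μ ≤
        μ Set.univ ^ (2:ℝ≥0∞).toReal⁻¹ * ENNReal.ofReal N :=
      eLpNorm_le_of_ae_bound (Filter.Eventually.of_forall fun x => by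
        rw [Real.norm_eq_abs]; exact abs_trunc_le_R (hNnn N) _ x)
    have hne : μ Set.univ ^ (2:ℝ≥0∞).toReal⁻¹ * ENNReal.ofReal (N:ℝ) ≠ ⊤ :=
      ENNReal.mul_ne_top (ENNReal.rpow_ne_top_of_nonneg (by positivity) (measure_ne_top μ _))
        ENNReal.ofReal_ne_top
    calc (eLpNorm (trunc (N:ℝ) (ξ' l)) 2 μ).toReal
        ≤ (μ Set.univ ^ (2:ℝ≥0∞).toReal⁻¹ * ENNReal.ofReal (N:ℝ)).toReal :=
          ENNReal.toReal_mono hne h2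
      _ = Bc * N := by rw [ENNReal.toReal_mul, hBc, ENNReal.toReal_ofReal (hNnn N)]
  have hFH_normH : ∀ l N, ‖FH l N‖ ≤ Bc * N := fun l N => hFH_norm l N
  have hBc0 : 0 ≤ Bc := ENNReal.toReal_nonneg
  -- diagonal subsequence
  set a : ℕ → (ℕ × ℕ) → ℝ := fun l p => (inner ℝ (FH l p.1) (d p.2) : ℝ) with ha
  have haK : ∀ l, a l ∈ Set.univ.pi fun p : ℕ × ℕ =>
      Set.Icc (-(Bc * p.1 * ‖d p.2‖)) (Bc * p.1 * ‖d p.2‖) := by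
    intro l
    rw [Set.mem_univ_pi]
    intro p
    rw [Set.mem_Icc, ← abs_le]
    calc |(inner ℝ (FH l p.1) (d p.2) : ℝ)| ≤ ‖FH l p.1‖ * ‖d p.2‖ := abs_real_inner_le_norm _ _
      _ ≤ Bc * p.1 * ‖d p.2‖ :=
          mul_le_mul_of_nonneg_right (hFH_normH l p.1) (norm_nonneg _)
  obtain ⟨af, -, s, hs, has⟩ := (isCompact_univ_pi fun p : ℕ × ℕ =>
    isCompact_Icc).tendsto_subseq haK
  have hcoord : ∀ N j, Tendsto (fun k => (inner ℝ (FH (s k) N) (d j) : ℝ)) atTop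
      (𝓝 (af (N, j))) := fun N j => tendsto_pi_nhds.mp has (N, j)
  -- weak limits of the truncated sequences
  have hZex : ∀ N : ℕ, ∃ z : lpMeas ℝ ℝ (sigmaAux T) 2 μ,
      ∀ y, Tendsto (fun k => (inner ℝ (FH (s k) N) y : ℝ)) atTop (𝓝 (inner ℝ z y)) := fun N =>
    aux_weak_limit (fun k => hFH_normH (s k) N) hd fun j => ⟨af (N, j), hcoord N j⟩
  choose Z hZ using hZex
  -- measurable representatives of the weak limits
  have hZm : ∀ N, AEStronglyMeasurable[sigmaAux T] ((Z N : Lp ℝ 2 μ) : Q → ℝ) μ :=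
    fun N => lpMeas.aestronglyMeasurable (Z N)
  set zf : ℕ → Q → ℝ := fun N => (hZm N).mk _ with hzf
  have hzfm' : ∀ N, @Measurable Q ℝ (sigmaAux T) _ (zf N) := fun N =>
    (hZm N).stronglyMeasurable_mk.measurable
  have hzfm : ∀ N, Measurable (zf N) := fun N => (hzfm' N).mono hm le_rfl
  have hzf_ae : ∀ N, ((Z N : Lp ℝ 2 μ) : Q → ℝ) =ᵐ[μ] zf N := fun N => (hZm N).ae_eq_mk
  have hzf2 : ∀ N, MemLp (zf N) 2 μ := fun N => (Lp.memLp (Z N : Lp ℝ 2 μ)).ae_eq (hzf_ae N)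
  -- inner ℝ products of Lp elements as integrals
  have hip : ∀ (F G : Lp ℝ 2 μ) (u v : Q → ℝ), ((F : Q → ℝ) =ᵐ[μ] u) →
      ((G : Q → ℝ) =ᵐ[μ] v) → (inner ℝ F G : ℝ) = ∫ x, u x * v x ∂μ := by
    intro F G u v hFu hGv
    rw [L2.inner_def]
    refine integral_congr_ae ?_
    filter_upwards [hFu, hGv] with x h1 h2
    simp [RCLike.inner_apply, h1, h2, mul_comm]
  have hipH : ∀ (u v : lpMeas ℝ ℝ (sigmaAux T) 2 μ) (a b : Q → ℝ),
      (((u : Lp ℝ 2 μ) : Q → ℝ) =ᵐ[μ] a) → (((v : Lp ℝ 2 μ) : Q → ℝ) =ᵐ[μ] b) →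
      (inner ℝ u v : ℝ) = ∫ x, a x * b x ∂μ := by
    intro u v a b hu hv
    rw [Submodule.coe_inner]
    exact hip _ _ _ _ hu hv
  -- integrability facts
  obtain ⟨t1, ht1pos, hsup1⟩ := hφ_superlin 1 one_pos
  have hξ'int : ∀ k, Integrable (ξ' k) μ := fun k =>
    aux_integrable φ hφ_meas hφ_nonneg hφ_cont (hξ'_meas k) (hbound' k) ht1pos hsup1
  have htrint : ∀ (k : ℕ) (R : ℝ), 0 ≤ R → Integrable (trunc R (ξ' k)) μ := fun k R hR =>
    memLp_one_iff_integrable.mp ((hmemLp k R hR).mono_exponent one_le_two)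
  have htail : ∀ (M tM : ℝ), 0 < M → (∀ x t, tM ≤ t → M * t ≤ φ x t) →
      ∀ (k : ℕ) (R : ℝ), tM ≤ R → 0 ≤ R →
        ∫ x, |ξ' k x - trunc R (ξ' k) x| ∂μ ≤ C / M :=
    fun M tM hM hsup k R hR hR0 =>
    aux_tail φ hφ_meas hφ_nonneg hφ_cont (hξ'_meas k) hC0 (hbound' k) hM hsup hR hR0
  have hdiffint : ∀ (k : ℕ) (R : ℝ), 0 ≤ R →
      Integrable (fun x => |ξ' k x - trunc R (ξ' k) x|) μ :=
    fun k R hR => ((hξ'int k).sub (htrint k R hR)).abs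
  have habs_sign : ∀ t : ℝ, |Real.sign t| ≤ 1 := by
    intro t
    rcases lt_trichotomy t 0 with h | h | h
    · rw [Real.sign_of_neg h]; norm_num
    · rw [h, Real.sign_zero]; norm_num
    · rw [Real.sign_of_pos h]; norm_num
  have hsign : ∀ t : ℝ, t * Real.sign t = |t| := by
    intro t
    rcases lt_trichotomy t 0 with h | h | h
    · rw [Real.sign_of_neg h, abs_of_neg h]; ring
    · rw [h, Real.sign_zero, abs_zero]; ring
    · rw [Real.sign_of_pos h, abs_of_pos h]; ring
  have hzf1 : ∀ N, Integrable (zf N) μ := fun N =>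
    memLp_one_iff_integrable.mp ((hzf2 N).mono_exponent one_le_two)
  -- L¹ Cauchy estimate for the weak limits of truncations
  have hzfCauchy : ∀ (M tM : ℝ), 0 < M → (∀ x t, tM ≤ t → M * t ≤ φ x t) →
      ∀ N N' : ℕ, tM ≤ (N : ℝ) → tM ≤ (N' : ℝ) →
        ∫ x, |zf N x - zf N' x| ∂μ ≤ 2 * (C / M) := by
    intro M tM hM hsup N N' hN hN'
    set g : Q → ℝ := fun x => Real.sign (zf N x - zf N' x) with hg
    have hsgnm : Measurable Real.sign := by
      have : Real.sign = fun r : ℝ => if r < 0 then -1 else if 0 < r then 1 else 0 := by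
        funext r; rfl
      rw [this]
      exact Measurable.ite (measurableSet_lt measurable_id measurable_const) measurable_const
        (Measurable.ite (measurableSet_lt measurable_const measurable_id) measurable_const
          measurable_const)
    have hgm' : @Measurable Q ℝ (sigmaAux T) _ g :=
      hsgnm.comp ((hzfm' N).sub (hzfm' N'))
    have hgm : Measurable g := hgm'.mono hm le_rfl
    have hgb : ∀ x, |g x| ≤ 1 := fun x => habs_sign _
    have hgmem : MemLp g 2 μ := MemLp.of_bound hgm.aestronglyMeasurable 1
      (Filter.Eventually.of_forall fun x => by rw [Real.norm_eq_abs]; exact hgb x)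
    set gL : lpMeas ℝ ℝ (sigmaAux T) 2 μ := ⟨hgmem.toLp _, by
      rw [mem_lpMeas_iff_aestronglyMeasurable]
      exact ⟨g, hgm'.stronglyMeasurable, hgmem.coeFn_toLp⟩⟩ with hgL
    have hgL_ae : ((gL : Lp ℝ 2 μ) : Q → ℝ) =ᵐ[μ] g := hgmem.coeFn_toLp
    have hbdd_mul : ∀ (f : Q → ℝ), Integrable f μ → Integrable (fun x => f x * g x) μ := by
      intro f hf
      have := hf.bdd_mul hgm.aestronglyMeasurable
        (Filter.Eventually.of_forall fun x => by rw [Real.norm_eq_abs]; exact hgb x)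
      simpa [mul_comm] using this
    have hlim : Tendsto (fun k => (inner ℝ (FH (s k) N) gL : ℝ) - inner ℝ (FH (s k) N') gL)
        atTop (𝓝 ((inner ℝ (Z N) gL : ℝ) - inner ℝ (Z N') gL)) := (hZ N gL).sub (hZ N' gL)
    have hval : (inner ℝ (Z N) gL : ℝ) - inner ℝ (Z N') gL = ∫ x, |zf N x - zf N' x| ∂μ := by
      rw [hipH _ _ _ _ (hzf_ae N) hgL_ae, hipH _ _ _ _ (hzf_ae N') hgL_ae,
        ← integral_sub (hbdd_mul _ (hzf1 N)) (hbdd_mul _ (hzf1 N'))]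
      refine integral_congr_ae (Filter.Eventually.of_forall fun x => ?_)
      show zf N x * g x - zf N' x * g x = |zf N x - zf N' x|
      rw [← sub_mul, hg]
      exact hsign _
    have hterm : ∀ k, (inner ℝ (FH (s k) N) gL : ℝ) - inner ℝ (FH (s k) N') gL ≤ 2 * (C / M) := by
      intro k
      rw [hipH _ _ _ _ (hFH_ae (s k) N) hgL_ae, hipH _ _ _ _ (hFH_ae (s k) N') hgL_ae,
        ← integral_sub (hbdd_mul _ (htrint (s k) N (hNnn N))) (hbdd_mul _ (htrint (s k) N' (hNnn N')))]
      have hintabs : Integrable (fun x => |ξ' (s k) x - trunc (N:ℝ) (ξ' (s k)) x| +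
          |ξ' (s k) x - trunc (N':ℝ) (ξ' (s k)) x|) μ :=
        (hdiffint (s k) N (hNnn N)).add (hdiffint (s k) N' (hNnn N'))
      have hptw : ∀ x, trunc (N:ℝ) (ξ' (s k)) x * g x - trunc (N':ℝ) (ξ' (s k)) x * g x ≤
          |ξ' (s k) x - trunc (N:ℝ) (ξ' (s k)) x| + |ξ' (s k) x - trunc (N':ℝ) (ξ' (s k)) x| := by
        intro x
        have h1 : trunc (N:ℝ) (ξ' (s k)) x * g x - trunc (N':ℝ) (ξ' (s k)) x * g x ≤
            |trunc (N:ℝ) (ξ' (s k)) x - trunc (N':ℝ) (ξ' (s k)) x| := by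
          calc trunc (N:ℝ) (ξ' (s k)) x * g x - trunc (N':ℝ) (ξ' (s k)) x * g x
              = (trunc (N:ℝ) (ξ' (s k)) x - trunc (N':ℝ) (ξ' (s k)) x) * g x := by ring
            _ ≤ |(trunc (N:ℝ) (ξ' (s k)) x - trunc (N':ℝ) (ξ' (s k)) x) * g x| := le_abs_self _
            _ = |trunc (N:ℝ) (ξ' (s k)) x - trunc (N':ℝ) (ξ' (s k)) x| * |g x| := abs_mul _ _
            _ ≤ |trunc (N:ℝ) (ξ' (s k)) x - trunc (N':ℝ) (ξ' (s k)) x| * 1 :=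
                mul_le_mul_of_nonneg_left (hgb x) (abs_nonneg _)
            _ = _ := mul_one _
        refine h1.trans ?_
        have h2 := abs_sub_le (trunc (N:ℝ) (ξ' (s k)) x) (ξ' (s k) x) (trunc (N':ℝ) (ξ' (s k)) x)
        rw [abs_sub_comm (trunc (N:ℝ) (ξ' (s k)) x) (ξ' (s k) x)] at h2
        exact h2
      calc ∫ x, (trunc (N:ℝ) (ξ' (s k)) x * g x - trunc (N':ℝ) (ξ' (s k)) x * g x) ∂μ
          ≤ ∫ x, (|ξ' (s k) x - trunc (N:ℝ) (ξ' (s k)) x| +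
              |ξ' (s k) x - trunc (N':ℝ) (ξ' (s k)) x|) ∂μ :=
            integral_mono ((hbdd_mul _ (htrint (s k) N (hNnn N))).sub
              (hbdd_mul _ (htrint (s k) N' (hNnn N')))) hintabs hptw
        _ = (∫ x, |ξ' (s k) x - trunc (N:ℝ) (ξ' (s k)) x| ∂μ) +
            ∫ x, |ξ' (s k) x - trunc (N':ℝ) (ξ' (s k)) x| ∂μ :=
            integral_add (hdiffint (s k) N (hNnn N)) (hdiffint (s k) N' (hNnn N'))
        _ ≤ C / M + C / M := add_le_add
            (htail M tM hM hsup (s k) N hN (hNnn N))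
            (htail M tM hM hsup (s k) N' hN' (hNnn N'))
        _ = 2 * (C / M) := by ring
    have := le_of_tendsto hlim (Filter.Eventually.of_forall hterm)
    rwa [hval] at this
  -- the L¹ limit ξ₀
  set ζ : ℕ → Lp ℝ 1 μ := fun N => (memLp_one_iff_integrable.mpr (hzf1 N)).toLp _ with hζ
  have hζdist : ∀ N N', dist (ζ N) (ζ N') = ∫ x, |zf N x - zf N' x| ∂μ := by
    intro N N'
    rw [dist_eq_norm, L1.norm_eq_integral_norm]
    refine integral_congr_ae ?_
    filter_upwards [Lp.coeFn_sub (ζ N) (ζ N'),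
      (memLp_one_iff_integrable.mpr (hzf1 N)).coeFn_toLp,
      (memLp_one_iff_integrable.mpr (hzf1 N')).coeFn_toLp] with x h1 h2 h3
    rw [h1]
    simp only [Pi.sub_apply]
    rw [h2, h3, Real.norm_eq_abs]
  have hζCauchy : CauchySeq ζ := by
    rw [Metric.cauchySeq_iff']
    intro ε hε
    set M : ℝ := (2 * C + ε) / ε with hMdef
    have hMpos : 0 < M := by positivity
    obtain ⟨tM, htMpos, hsup⟩ := hφ_superlin M hMpos
    refine ⟨⌈tM⌉₊, fun n hn => ?_⟩
    have h1 : tM ≤ (⌈tM⌉₊ : ℝ) := Nat.le_ceil tM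
    have h2 : tM ≤ (n : ℝ) := h1.trans (Nat.cast_le.mpr hn)
    rw [hζdist]
    calc ∫ x, |zf n x - zf ⌈tM⌉₊ x| ∂μ ≤ 2 * (C / M) := hzfCauchy M tM hMpos hsup _ _ h2 h1
      _ < ε := by
        have hden : (0:ℝ) < 2 * C + ε := by positivity
        rw [hMdef, div_div_eq_mul_div, ← mul_div_assoc, div_lt_iff₀ hden]
        nlinarith
  obtain ⟨ξL1, hξL1⟩ := cauchySeq_tendsto_of_complete hζCauchy
  set ξ₀ : Q → ℝ := (Lp.aestronglyMeasurable ξL1).mk _ with hξ₀def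
  have hξ₀m : Measurable ξ₀ := (Lp.aestronglyMeasurable ξL1).stronglyMeasurable_mk.measurable
  have hξ₀ae : ((ξL1 : Lp ℝ 1 μ) : Q → ℝ) =ᵐ[μ] ξ₀ := (Lp.aestronglyMeasurable ξL1).ae_eq_mk
  have hξ₀int : Integrable ξ₀ μ := (L1.integrable_coeFn ξL1).congr hξ₀ae
  have hL1conv : Tendsto (fun N => ∫ x, |zf N x - ξ₀ x| ∂μ) atTop (𝓝 0) := by
    have h1 : Tendsto (fun N => dist (ζ N) ξL1) atTop (𝓝 0) :=
      tendsto_iff_dist_tendsto_zero.mp hξL1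
    refine h1.congr fun N => ?_
    rw [dist_eq_norm, L1.norm_eq_integral_norm]
    refine integral_congr_ae ?_
    filter_upwards [Lp.coeFn_sub (ζ N) ξL1,
      (memLp_one_iff_integrable.mpr (hzf1 N)).coeFn_toLp, hξ₀ae] with x h1 h2 h3
    rw [h1]
    simp only [Pi.sub_apply]
    rw [h2, h3, Real.norm_eq_abs]
  -- modular bounds via Mazur's lemma and Fatou
  have hmod_trunc : ∀ (k : ℕ) (R : ℝ), 0 ≤ R →
      ∫⁻ x, ENNReal.ofReal (φ x |trunc R (ξ' k) x|) ∂μ ≤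
        ∫⁻ x, ENNReal.ofReal (φ x |ξ' k x|) ∂μ := fun k R hR =>
    lintegral_mono fun x => ENNReal.ofReal_le_ofReal
      (hφ_mono x (Set.mem_Ici.mpr (abs_nonneg _)) (Set.mem_Ici.mpr (abs_nonneg _))
        (abs_trunc_le_abs hR _ x))
  have hmod_zf : ∀ N : ℕ, ∫⁻ x, ENNReal.ofReal (φ x |zf N x|) ∂μ ≤ L := by
    intro N
    refine ENNReal.le_of_forall_pos_le_add fun ε hε hLt => ?_
    have hev : ∀ᶠ k in atTop,
        (∫⁻ x, ENNReal.ofReal (φ x |ξ' k x|) ∂μ) < L + (ε : ℝ≥0∞) :=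
      hL.eventually_lt_const (ENNReal.lt_add_right hL_top (by exact_mod_cast hε.ne'))
    obtain ⟨K₀, hK₀⟩ := Filter.eventually_atTop.mp hev
    have hmem := aux_mazur (f := fun k => FH (s k) N) (z := Z N) (hZ N) K₀
    rw [mem_closure_iff_seq_limit] at hmem
    obtain ⟨c, hcmem, hctend⟩ := hmem
    have hcj : ∀ j, ∫⁻ x, ENNReal.ofReal (φ x |((c j : Lp ℝ 2 μ) : Q → ℝ) x|) ∂μ ≤
        L + (ε : ℝ≥0∞) := by
      intro j
      have hmem2 := hcmem j
      rw [convexHull_eq] at hmem2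
      obtain ⟨ι, t, w, zmap, hw0, hw1, hzmem, hcm⟩ := hmem2
      have hsum : (c j : Lp ℝ 2 μ) = ∑ i ∈ t, w i • ((zmap i : Lp ℝ 2 μ)) := by
        rw [← hcm, Finset.centerMass_eq_of_sum_1 _ _ hw1, AddSubmonoidClass.coe_finset_sum]
        exact Finset.sum_congr rfl fun i _ => rfl
      rw [hsum]
      refine aux_modular_combo_Lp φ hφ_nonneg hφ_conv hφ_mono t w
        (fun i => (zmap i : Lp ℝ 2 μ)) hw0 hw1 fun i hi => ?_
      obtain ⟨k, hk⟩ := hzmem i hi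
      refine ⟨trunc (N:ℝ) (ξ' (s (K₀ + k))), trunc_measurable (hξ'_meas _), ?_, 
        aux_phi_meas φ hφ_meas hφ_cont (trunc_measurable (hξ'_meas _)), ?_⟩
      · show ((zmap i : Lp ℝ 2 μ) : Q → ℝ) =ᵐ[μ] trunc (N:ℝ) (ξ' (s (K₀ + k)))
        rw [← hk]
        exact hFH_ae _ N
      · refine le_trans (hmod_trunc (s (K₀ + k)) N (hNnn N)) ?_
        refine (hK₀ (s (K₀ + k)) ?_).le
        exact le_trans (Nat.le_add_right K₀ k) hs.le_apply
    have hctendLp : Tendsto (fun j => (c j : Lp ℝ 2 μ)) atTop (𝓝 (Z N : Lp ℝ 2 μ)) :=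
      ((continuous_subtype_val).tendsto _).comp hctend
    rw [Lp.tendsto_Lp_iff_tendsto_eLpNorm'] at hctendLp
    have hTIM : TendstoInMeasure μ (fun j => ((c j : Lp ℝ 2 μ) : Q → ℝ)) atTop
        (((Z N : Lp ℝ 2 μ)) : Q → ℝ) :=
      tendstoInMeasure_of_tendsto_eLpNorm (p := 2) two_ne_zero
        (fun j => Lp.aestronglyMeasurable _) (Lp.aestronglyMeasurable _) hctendLp
    obtain ⟨ns, hns, haet⟩ := hTIM.exists_seq_tendsto_ae
    refine aux_modular_fatou μ φ hφ_meas hφ_cont (h := zf N)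
      (c := fun i => ((c (ns i) : Lp ℝ 2 μ) : Q → ℝ)) ?_
      (fun i => (Lp.aestronglyMeasurable _).aemeasurable) (fun i => hcj (ns i))
    filter_upwards [haet, hzf_ae N] with x hx1 hx2
    rw [← hx2]
    exact hx1
  -- modular bound for ξ₀ via Fatou
  have hmod_ξ₀ : ∫⁻ x, ENNReal.ofReal (φ x |ξ₀ x|) ∂μ ≤ L := by
    have hsn : Tendsto (fun N => eLpNorm (zf N - ξ₀) 1 μ) atTop (𝓝 0) := by
      have h1 := (Lp.tendsto_Lp_iff_tendsto_eLpNorm' ζ ξL1).mp hξL1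
      refine h1.congr fun N => ?_
      refine eLpNorm_congr_ae ?_
      filter_upwards [(memLp_one_iff_integrable.mpr (hzf1 N)).coeFn_toLp, hξ₀ae]
        with x h2 h3
      simp only [Pi.sub_apply]
      rw [h2, h3]
    have hTIM : TendstoInMeasure μ zf atTop ξ₀ :=
      tendstoInMeasure_of_tendsto_eLpNorm one_ne_zero
        (fun N => (hzf1 N).aestronglyMeasurable) hξ₀int.aestronglyMeasurable hsn
    obtain ⟨ns, hns, haet⟩ := hTIM.exists_seq_tendsto_ae
    exact aux_modular_fatou μ φ hφ_meas hφ_cont (h := ξ₀) (c := fun i => zf (ns i)) haet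
      (fun i => (hzfm _).aemeasurable) (fun i => hmod_zf (ns i))
  have hmod_fin : (∫⁻ x, ENNReal.ofReal (φ x |ξ₀ x|) ∂μ) < ⊤ :=
    lt_of_le_of_lt (hmod_ξ₀.trans hL_le) ENNReal.ofReal_lt_top
  -- weak L¹ convergence against bounded measurable test functions
  have hweak : ∀ g : Q → ℝ, Measurable g → (∃ M : ℝ, ∀ x, |g x| ≤ M) →
      Tendsto (fun k => ∫ x, ξ' (s k) x * g x ∂μ) atTop
        (𝓝 (∫ x, ξ₀ x * g x ∂μ)) := by
    intro g hgm hgbdd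
    obtain ⟨Mg₀, hMg₀⟩ := hgbdd
    set Mg : ℝ := max Mg₀ 0 with hMgdef
    have hMg : ∀ x, |g x| ≤ Mg := fun x => (hMg₀ x).trans (le_max_left _ _)
    have hMg0 : 0 ≤ Mg := le_max_right _ _
    have hgmem : MemLp g 2 μ := MemLp.of_bound hgm.aestronglyMeasurable Mg
      (Filter.Eventually.of_forall fun x => by rw [Real.norm_eq_abs]; exact hMg x)
    set gLp : Lp ℝ 2 μ := hgmem.toLp _ with hgLpdef
    have hgae : ((gLp : Lp ℝ 2 μ) : Q → ℝ) =ᵐ[μ] g := hgmem.coeFn_toLp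
    set PG : lpMeas ℝ ℝ (sigmaAux T) 2 μ :=
      Submodule.orthogonalProjection (lpMeas ℝ ℝ (sigmaAux T) 2 μ) gLp with hPGdef
    have hproj : ∀ v : lpMeas ℝ ℝ (sigmaAux T) 2 μ,
        (inner ℝ v PG : ℝ) = inner ℝ ((v : Lp ℝ 2 μ)) gLp := by
      intro v
      have h0 : (inner ℝ (gLp - ((PG : Lp ℝ 2 μ))) ((v : Lp ℝ 2 μ)) : ℝ) = 0 :=
        Submodule.starProjection_inner_eq_zero gLp _ v.2
      rw [real_inner_comm, inner_sub_right] at h0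
      have h1 : (inner ℝ ((v : Lp ℝ 2 μ)) gLp : ℝ) = inner ℝ ((v : Lp ℝ 2 μ)) ((PG : Lp ℝ 2 μ)) := by
        linarith
      rw [Submodule.coe_inner, h1]
    have hg_bdd_mul : ∀ f : Q → ℝ, Integrable f μ → Integrable (fun x => f x * g x) μ := by
      intro f hf
      have := hf.bdd_mul hgm.aestronglyMeasurable
        (Filter.Eventually.of_forall fun x => by rw [Real.norm_eq_abs]; exact hMg x)
      simpa [mul_comm] using this
    rw [Metric.tendsto_atTop]
    intro ε hε
    set Mden : ℝ := (6 * (Mg + 1) * C + ε) / ε with hMdendef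
    have hMdenpos : 0 < Mden := by positivity
    obtain ⟨tM, htMpos, hsupM⟩ := hφ_superlin Mden hMdenpos
    have hkey : Mg * (C / Mden) < ε / 6 := by
      have hden : (0:ℝ) < 6 * (Mg + 1) * C + ε := by positivity
      rw [hMdendef, div_div_eq_mul_div, ← mul_div_assoc, div_lt_iff₀ hden]
      nlinarith
    have hεd : 0 < ε / (6 * (Mg + 1)) := by positivity
    obtain ⟨N₁, hN₁⟩ := (Metric.tendsto_atTop.mp hL1conv) (ε / (6 * (Mg + 1))) hεd
    set N : ℕ := max ⌈tM⌉₊ N₁ with hNdef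
    have hNtm : tM ≤ (N : ℝ) := (Nat.le_ceil tM).trans (Nat.cast_le.mpr (le_max_left _ _))
    have hNN₁ : N₁ ≤ N := le_max_right _ _
    -- term 1 : uniform truncation error
    have hT1 : ∀ k : ℕ,
        |∫ x, ξ' (s k) x * g x ∂μ - ∫ x, trunc (N:ℝ) (ξ' (s k)) x * g x ∂μ| ≤
          Mg * (C / Mden) := by
      intro k
      rw [← integral_sub (hg_bdd_mul _ (hξ'int (s k))) (hg_bdd_mul _ (htrint (s k) N (hNnn N)))]
      have hIabs : Integrable
          (fun x => |ξ' (s k) x * g x - trunc (N:ℝ) (ξ' (s k)) x * g x|) μ :=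
        ((hg_bdd_mul _ (hξ'int (s k))).sub (hg_bdd_mul _ (htrint (s k) N (hNnn N)))).abs
      calc |∫ x, (ξ' (s k) x * g x - trunc (N:ℝ) (ξ' (s k)) x * g x) ∂μ|
          ≤ ∫ x, |ξ' (s k) x * g x - trunc (N:ℝ) (ξ' (s k)) x * g x| ∂μ := by
            rw [← Real.norm_eq_abs]
            refine (norm_integral_le_integral_norm _).trans (le_of_eq ?_)
            simp [Real.norm_eq_abs]
        _ ≤ ∫ x, |ξ' (s k) x - trunc (N:ℝ) (ξ' (s k)) x| * Mg ∂μ := by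
            refine integral_mono hIabs ((hdiffint (s k) N (hNnn N)).mul_const Mg) fun x => ?_
            rw [← sub_mul, abs_mul]
            exact mul_le_mul_of_nonneg_left (hMg x) (abs_nonneg _)
        _ = (∫ x, |ξ' (s k) x - trunc (N:ℝ) (ξ' (s k)) x| ∂μ) * Mg := by
            rw [integral_mul_const]
        _ ≤ (C / Mden) * Mg := mul_le_mul_of_nonneg_right
            (htail Mden tM hMdenpos hsupM (s k) N hNtm (hNnn N)) hMg0
        _ = Mg * (C / Mden) := mul_comm _ _
    -- term 3 : L¹ distance to the limit
    have hT3 : |∫ x, zf N x * g x ∂μ - ∫ x, ξ₀ x * g x ∂μ| ≤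
        Mg * ∫ x, |zf N x - ξ₀ x| ∂μ := by
      rw [← integral_sub (hg_bdd_mul _ (hzf1 N)) (hg_bdd_mul _ hξ₀int)]
      have hIabs : Integrable (fun x => |zf N x * g x - ξ₀ x * g x|) μ :=
        ((hg_bdd_mul _ (hzf1 N)).sub (hg_bdd_mul _ hξ₀int)).abs
      calc |∫ x, (zf N x * g x - ξ₀ x * g x) ∂μ|
          ≤ ∫ x, |zf N x * g x - ξ₀ x * g x| ∂μ := by
            rw [← Real.norm_eq_abs]
            refine (norm_integral_le_integral_norm _).trans (le_of_eq ?_)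
            simp [Real.norm_eq_abs]
        _ ≤ ∫ x, |zf N x - ξ₀ x| * Mg ∂μ := by
            refine integral_mono hIabs (((hzf1 N).sub hξ₀int).abs.mul_const Mg) fun x => ?_
            rw [← sub_mul, abs_mul]
            exact mul_le_mul_of_nonneg_left (hMg x) (abs_nonneg _)
        _ = (∫ x, |zf N x - ξ₀ x| ∂μ) * Mg := by rw [integral_mul_const]
        _ = Mg * ∫ x, |zf N x - ξ₀ x| ∂μ := mul_comm _ _
    have hT3' : |∫ x, zf N x * g x ∂μ - ∫ x, ξ₀ x * g x ∂μ| ≤ ε / 6 := by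
      refine hT3.trans ?_
      have h4 : ∫ x, |zf N x - ξ₀ x| ∂μ < ε / (6 * (Mg + 1)) := by
        have := hN₁ N hNN₁
        rw [Real.dist_eq, sub_zero,
          abs_of_nonneg (integral_nonneg fun x => abs_nonneg _)] at this
        exact this
      calc Mg * ∫ x, |zf N x - ξ₀ x| ∂μ ≤ Mg * (ε / (6 * (Mg + 1))) :=
            mul_le_mul_of_nonneg_left h4.le hMg0
        _ ≤ (Mg + 1) * (ε / (6 * (Mg + 1))) :=
            mul_le_mul_of_nonneg_right (by linarith) hεd.le
        _ = ε / 6 := by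
            field_simp
    -- term 2 : weak convergence of the truncations at level N
    have hT2 : Tendsto (fun k => ∫ x, trunc (N:ℝ) (ξ' (s k)) x * g x ∂μ) atTop
        (𝓝 (∫ x, zf N x * g x ∂μ)) := by
      have heq : (inner ℝ (Z N) PG : ℝ) = ∫ x, zf N x * g x ∂μ := by
        rw [hproj]
        exact hip _ _ _ _ (hzf_ae N) hgae
      rw [← heq]
      exact (hZ N PG).congr fun k => by
        rw [hproj]
        exact hip _ _ _ _ (hFH_ae (s k) N) hgae
    obtain ⟨K₂, hK₂⟩ := (Metric.tendsto_atTop.mp hT2) (ε / 6) (by positivity)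
    refine ⟨K₂, fun k hk => ?_⟩
    rw [Real.dist_eq]
    have e1 := hT1 k
    have e2 := hK₂ k hk
    rw [Real.dist_eq] at e2
    calc |∫ x, ξ' (s k) x * g x ∂μ - ∫ x, ξ₀ x * g x ∂μ|
        ≤ |∫ x, ξ' (s k) x * g x ∂μ - ∫ x, trunc (N:ℝ) (ξ' (s k)) x * g x ∂μ| +
          |∫ x, trunc (N:ℝ) (ξ' (s k)) x * g x ∂μ - ∫ x, zf N x * g x ∂μ| +
          |∫ x, zf N x * g x ∂μ - ∫ x, ξ₀ x * g x ∂μ| := by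
          have := abs_sub_le (∫ x, ξ' (s k) x * g x ∂μ)
            (∫ x, trunc (N:ℝ) (ξ' (s k)) x * g x ∂μ) (∫ x, ξ₀ x * g x ∂μ)
          have h2 := abs_sub_le (∫ x, trunc (N:ℝ) (ξ' (s k)) x * g x ∂μ)
            (∫ x, zf N x * g x ∂μ) (∫ x, ξ₀ x * g x ∂μ)
          linarith
      _ < ε / 6 + ε / 6 + ε / 6 := by
          refine add_lt_add_of_lt_of_le (add_lt_add_of_le_of_lt (e1.trans hkey.le) e2) hT3'
      _ ≤ ε := by linarith
  -- assembling the result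
  refine ⟨ξ₀, hξ₀m, hmod_fin, fun k => s₀ (s k), hs₀.comp hs, hweak, ?_⟩
  have hconv2 : Tendsto (fun k => ∫⁻ x, ENNReal.ofReal (φ x |ξ' (s k) x|) ∂μ) atTop (𝓝 L) :=
    hL.comp hs.tendsto_atTop
  have hliminf : liminf (fun k => ∫⁻ x, ENNReal.ofReal (φ x |ξ' (s k) x|) ∂μ) atTop = L :=
    hconv2.liminf_eq
  exact le_trans hmod_ξ₀ (le_of_eq hliminf.symm)
end

section
/- Let Ω ⊆ ℝ^d be a bounded open set, b₀ > 0, ν₁ > 0 and τ > 0. Let b : ℝ → ℝ be differentiable with b₀ ≤ b'(s) for all s ∈ ℝ, let a : ℝ^d → ℝ^d be monotone (i.e. (a(ξ) − a(η))·(ξ − η) ≥ 0 for all ξ, η), and let K : ℝ → ℝ^d satisfy |K(s) − K(s')| ≤ ν₁ |s − s'| for all s, s' ∈ ℝ. Let v, w : Ω → ℝ be differentiable functions such that v − w ∈ L¹(Ω), b(v) − b(w) ∈ L¹(Ω) and ∇(v − w) ∈ L¹(Ω; ℝ^d). Suppose that for every k > 0 one has ∫_Ω (b(v) − b(w)) T_k(v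 − w) dx = − τ ∫_{{|v−w| ≤ k}} (a(∇v(x)) − a(∇w(x)))·∇(v − w)(x) dx − τ ∫_{{|v−w| ≤ k}} (K(v(x)) − K(w(x)))·∇(v − w)(x) dx (where the first integral on the right is finite or +∞, being non-negative by monotonicity). Then v = w almost everywhere in Ω. -/
/-! Test with `T_k(v − w)` and divide by `k`. As `k → 0⁺`, `T_k(r)/k → sign r`, and since `b` is
strictly increasing, `(b(v) − b(w)) sign(v − w) = |b(v) − b(w)|`; by dominated convergence the left
side tends to `∫_Ω |b(v) − b(w)|`. On the right the monotone term has a sign, and the Lipschitz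
bound on `K` leaves at most `τ ν₁ ∫_{|v−w| ≤ k} (|v − w|/k) |∇(v − w)|`. This tends to `0` by
dominated convergence: the integrand is bounded by `|∇(v − w)|` and vanishes for small `k` at
every point, including those where `v = w`. Hence `b(v) = b(w)`, i.e. `v = w`, almost everywhere. -/

open MeasureTheory Filter Topology

theorem tendsto_truncation_div_nhdsGT_zero (r : ℝ) :
    Tendsto (fun k => max (-k) (min k r) / k) (𝓝[>] 0) (𝓝 (Real.sign r)) := by
  refine tendsto_const_nhds.congr' ?_
  rcases lt_trichotomy r 0 with hr | rfl | hr
  · filter_upwards [Ioo_mem_nhdsGT (neg_pos.2 hr)] with k ⟨hk, hkr⟩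
    rw [Real.sign_of_neg hr, min_eq_right (by linarith), max_eq_left (by linarith),
      neg_div_self hk.ne']
  · filter_upwards [self_mem_nhdsWithin] with k (hk : 0 < k)
    simp [hk.le]
  · filter_upwards [Ioo_mem_nhdsGT hr] with k ⟨hk, hkr⟩
    rw [Real.sign_of_pos hr, min_eq_left hkr.le, max_eq_right (by linarith), div_self hk.ne']

theorem StrictMono.sub_mul_sign_sub {b : ℝ → ℝ} (hb : StrictMono b) (s t : ℝ) :
    (b s - b t) * Real.sign (s - t) = |b s - b t| := by
  rcases lt_trichotomy s t with h | rfl | h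
  · rw [Real.sign_of_neg (sub_neg.2 h), abs_of_neg (sub_neg.2 (hb h)), mul_neg_one]
  · simp
  · rw [Real.sign_of_pos (sub_pos.2 h), abs_of_pos (sub_pos.2 (hb h)), mul_one]

namespace MeasureTheory

variable {α : Type*} [MeasurableSpace α] {μ : Measure α}

theorem Measure.restrict_sep_eq_restrict_restrict {s : Set α} {p : α → Prop}
    (hp : NullMeasurableSet {x | p x} (μ.restrict s)) :
    μ.restrict {x ∈ s | p x} = (μ.restrict s).restrict {x | p x} := by
  rw [Measure.restrict_restrict₀ hp, Set.ofPred_inter_eq_sep]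

theorem AEStronglyMeasurable.nullMeasurableSet_abs_le {f : α → ℝ}
    (hf : AEStronglyMeasurable f μ) (k : ℝ) : NullMeasurableSet {x | |f x| ≤ k} μ :=
  nullMeasurableSet_le (continuous_abs.comp_aestronglyMeasurable hf) aestronglyMeasurable_const

theorem tendsto_inv_mul_integral_mul_truncation_nhdsGT_zero {β f : α → ℝ} (hβ : Integrable β μ)
    (hf : AEStronglyMeasurable f μ) :
    Tendsto (fun k => k⁻¹ * ∫ x, β x * max (-k) (min k (f x)) ∂μ) (𝓝[>] 0)
      (𝓝 (∫ x, β x * Real.sign (f x) ∂μ)) := by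
  simp_rw [← integral_const_mul]
  refine tendsto_integral_filter_of_dominated_convergence (fun x => |β x|)
    (Eventually.of_forall fun k => ?_) ?_ hβ.abs (Eventually.of_forall fun x => ?_)
  · exact (hβ.aestronglyMeasurable.mul
      ((continuous_const.max (continuous_const.min continuous_id)).comp_aestronglyMeasurable
        hf)).const_mul _
  · filter_upwards [self_mem_nhdsWithin] with k (hk : 0 < k)
    refine Eventually.of_forall fun x => ?_
    have : |max (-k) (min k (f x))| ≤ k :=
      abs_le.2 ⟨le_max_left _ _, max_le (by linarith) (min_le_left _ _)⟩
    rw [Real.norm_eq_abs, abs_mul, abs_mul, abs_inv, abs_of_pos hk, mul_left_comm]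
    calc |β x| * (k⁻¹ * |max (-k) (min k (f x))|) ≤ |β x| * (k⁻¹ * k) := by gcongr
      _ = |β x| := by rw [inv_mul_cancel₀ hk.ne', mul_one]
  · exact ((tendsto_truncation_div_nhdsGT_zero (f x)).const_mul (β x)).congr fun k => by ring

variable {s : Set α} {f : α → ℝ}

theorem IntegrableOn.abs_mul_sep_abs_le {g : α → ℝ} (hf : AEStronglyMeasurable f (μ.restrict s))
    (hg : IntegrableOn g s μ) (k : ℝ) :
    IntegrableOn (fun x => |f x| * g x) {x ∈ s | |f x| ≤ k} μ := by
  have hS := hf.nullMeasurableSet_abs_le k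
  rw [IntegrableOn, Measure.restrict_sep_eq_restrict_restrict hS]
  refine (hg.integrable.norm.const_mul k).restrict.mono'
    ((continuous_abs.comp_aestronglyMeasurable hf).mul hg.aestronglyMeasurable).restrict ?_
  filter_upwards [ae_restrict_mem₀ hS] with x (hx : |f x| ≤ k)
  rw [norm_mul, Real.norm_eq_abs, abs_abs]
  exact mul_le_mul_of_nonneg_right hx (norm_nonneg _)

theorem tendsto_inv_mul_setIntegral_abs_mul_nhdsGT_zero {g : α → ℝ}
    (hf : AEStronglyMeasurable f (μ.restrict s)) (hg : IntegrableOn g s μ) :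
    Tendsto (fun k => k⁻¹ * ∫ x in {x ∈ s | |f x| ≤ k}, |f x| * g x ∂μ) (𝓝[>] 0) (𝓝 0) := by
  have hS := hf.nullMeasurableSet_abs_le
  simp_rw [Measure.restrict_sep_eq_restrict_restrict (hS _), ← integral_const_mul,
    ← integral_indicator₀ (hS _)]
  rw [show 𝓝 (0 : ℝ) = 𝓝 (∫ _ in s, (0 : ℝ) ∂μ) by simp]
  refine tendsto_integral_filter_of_dominated_convergence (fun x => |g x|)
    (Eventually.of_forall fun k => ?_) ?_ hg.abs (Eventually.of_forall fun x => ?_)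
  · exact (((continuous_abs.comp_aestronglyMeasurable hf).mul
      hg.aestronglyMeasurable).const_mul _).indicator₀ (hS k)
  · filter_upwards [self_mem_nhdsWithin] with k (hk : 0 < k)
    refine Eventually.of_forall fun x => ?_
    by_cases hx : x ∈ {x | |f x| ≤ k}
    · rw [Set.indicator_of_mem hx, Real.norm_eq_abs, abs_mul, abs_mul, abs_abs, abs_inv,
        abs_of_pos hk, ← mul_assoc]
      calc k⁻¹ * |f x| * |g x| ≤ k⁻¹ * k * |g x| := by gcongr; exact hx
        _ = |g x| := by rw [inv_mul_cancel₀ hk.ne', one_mul]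
    · simp [Set.indicator_of_notMem hx]
  · refine tendsto_const_nhds.congr' ?_
    by_cases hfx : f x = 0
    · exact Eventually.of_forall fun k => by simp [Set.indicator_apply, hfx]
    · filter_upwards [Ioo_mem_nhdsGT (abs_pos.2 hfx)] with k ⟨_, hk⟩
      exact (Set.indicator_of_notMem (show x ∉ {x | |f x| ≤ k} from hk.not_ge) _).symm

theorem abs_setIntegral_inner_sub_le {E : Type*} [NormedAddCommGroup E] [InnerProductSpace ℝ E]
    {K : ℝ → E} {ν₁ : ℝ} (hK : ∀ s s', ‖K s - K s'‖ ≤ ν₁ * |s - s'|) {v w : α → ℝ} {G : α → E}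
    (hf : AEStronglyMeasurable (fun x => v x - w x) (μ.restrict s))
    (hG : IntegrableOn (fun x => ‖G x‖) s μ) (k : ℝ) :
    |∫ x in {x ∈ s | |v x - w x| ≤ k}, (inner ℝ (K (v x) - K (w x)) (G x) : ℝ) ∂μ| ≤
      ν₁ * ∫ x in {x ∈ s | |v x - w x| ≤ k}, |v x - w x| * ‖G x‖ ∂μ := by
  rw [← integral_const_mul, ← Real.norm_eq_abs]
  refine norm_integral_le_of_norm_le ((hG.abs_mul_sep_abs_le hf k).const_mul ν₁)
    (Eventually.of_forall fun x => ?_)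
  calc ‖(inner ℝ (K (v x) - K (w x)) (G x) : ℝ)‖ ≤ ‖K (v x) - K (w x)‖ * ‖G x‖ :=
        norm_inner_le_norm _ _
    _ ≤ ν₁ * |v x - w x| * ‖G x‖ := by gcongr; exact hK _ _
    _ = ν₁ * (|v x - w x| * ‖G x‖) := by ring

end MeasureTheory

theorem stmt_3_general {d : ℕ} (Ω : Set (EuclideanSpace ℝ (Fin d)))
    (b₀ ν₁ τ : ℝ) (hb₀ : 0 < b₀) (hτ : 0 < τ)
    (b : ℝ → ℝ)
    (hb' : ∀ s : ℝ, b₀ ≤ deriv b s)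
    (a : EuclideanSpace ℝ (Fin d) → EuclideanSpace ℝ (Fin d))
    (ha_mono : ∀ ξ η : EuclideanSpace ℝ (Fin d), 0 ≤ (inner ℝ (a ξ - a η) (ξ - η) : ℝ))
    (K : ℝ → EuclideanSpace ℝ (Fin d))
    (hK : ∀ s s' : ℝ, ‖K s - K s'‖ ≤ ν₁ * |s - s'|)
    (v w : EuclideanSpace ℝ (Fin d) → ℝ)
    (hvw_int : IntegrableOn (fun x => v x - w x) Ω volume)
    (hbvw_int : IntegrableOn (fun x => b (v x) - b (w x)) Ω volume)
    (hgrad_int : IntegrableOn (fun x => gradient v x - gradient w x) Ω volume)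
    (htest : ∀ k : ℝ, 0 < k →
      ∫ x in Ω, (b (v x) - b (w x)) * max (-k) (min k (v x - w x)) =
        -τ * (∫ x in {x ∈ Ω | |v x - w x| ≤ k},
            (inner ℝ (a (gradient v x) - a (gradient w x))
              (gradient v x - gradient w x) : ℝ))
          - τ * ∫ x in {x ∈ Ω | |v x - w x| ≤ k},
              (inner ℝ (K (v x) - K (w x)) (gradient v x - gradient w x) : ℝ)) :
    ∀ᵐ x ∂(volume.restrict Ω), v x = w x := by
  have hb : StrictMono b := strictMono_of_deriv_pos fun s => hb₀.trans_le (hb' s)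
  have hf := hvw_int.aestronglyMeasurable
  have hdivided : ∀ k > 0, k⁻¹ * ∫ x in Ω, (b (v x) - b (w x)) * max (-k) (min k (v x - w x)) ≤
      τ * ν₁ * (k⁻¹ * ∫ x in {x ∈ Ω | |v x - w x| ≤ k},
        |v x - w x| * ‖gradient v x - gradient w x‖) := by
    intro k hk
    have hmono : 0 ≤ ∫ x in {x ∈ Ω | |v x - w x| ≤ k},
        (inner ℝ (a (gradient v x) - a (gradient w x)) (gradient v x - gradient w x) : ℝ) :=
      integral_nonneg fun x => ha_mono _ _
    have hlip := abs_setIntegral_inner_sub_le hK hf hgrad_int.norm k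
    rw [htest k hk, mul_left_comm (τ * ν₁), mul_assoc τ]
    refine mul_le_mul_of_nonneg_left ?_ (inv_nonneg.2 hk.le)
    linarith [mul_nonneg hτ.le hmono, mul_le_mul_of_nonneg_left ((neg_le_abs _).trans hlip) hτ.le]
  have hlim_left := tendsto_inv_mul_integral_mul_truncation_nhdsGT_zero hbvw_int hf
  have hlim_right :=
    (tendsto_inv_mul_setIntegral_abs_mul_nhdsGT_zero hf hgrad_int.norm).const_mul (τ * ν₁)
  simp only [hb.sub_mul_sign_sub] at hlim_left
  rw [mul_zero] at hlim_right
  have hle := le_of_tendsto_of_tendsto hlim_left hlim_right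
    (eventually_mem_nhdsWithin.mono hdivided)
  have hzero : (fun x => |b (v x) - b (w x)|) =ᵐ[volume.restrict Ω] 0 :=
    (integral_eq_zero_iff_of_nonneg (fun x => abs_nonneg _) hbvw_int.abs).1
      (hle.antisymm (integral_nonneg fun x => abs_nonneg _))
  filter_upwards [hzero] with x hx
  exact hb.injective (sub_eq_zero.1 (abs_eq_zero.1 hx))

/-- Uniqueness argument for the discrete problem: if `b` is differentiable with
`b' ≥ b₀ > 0`, `a` is monotone, `K` is `ν₁`-Lipschitz, and two differentiable
functions `v, w` satisfy, for every `k > 0`, the tested identity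
`∫_Ω (b(v) − b(w)) T_k(v − w) = −τ ∫_{{|v−w|≤k}} (a(∇v) − a(∇w))·∇(v−w)
  − τ ∫_{{|v−w|≤k}} (K(v) − K(w))·∇(v−w)`,
then `v = w` almost everywhere in `Ω`. -/
theorem stmt_3 {d : ℕ} (Ω : Set (EuclideanSpace ℝ (Fin d)))
    (hΩ_open : IsOpen Ω) (hΩ_bdd : Bornology.IsBounded Ω)
    (b₀ ν₁ τ : ℝ) (hb₀ : 0 < b₀) (hν₁ : 0 < ν₁) (hτ : 0 < τ)
    (b : ℝ → ℝ) (hb_diff : Differentiable ℝ b)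
    (hb' : ∀ s : ℝ, b₀ ≤ deriv b s)
    (a : EuclideanSpace ℝ (Fin d) → EuclideanSpace ℝ (Fin d))
    (ha_mono : ∀ ξ η : EuclideanSpace ℝ (Fin d), 0 ≤ (inner ℝ (a ξ - a η) (ξ - η) : ℝ))
    (K : ℝ → EuclideanSpace ℝ (Fin d))
    (hK : ∀ s s' : ℝ, ‖K s - K s'‖ ≤ ν₁ * |s - s'|)
    (v w : EuclideanSpace ℝ (Fin d) → ℝ)
    (hv_diff : ∀ x ∈ Ω, DifferentiableAt ℝ v x)
    (hw_diff : ∀ x ∈ Ω, DifferentiableAt ℝ w x)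
    (hvw_int : IntegrableOn (fun x => v x - w x) Ω volume)
    (hbvw_int : IntegrableOn (fun x => b (v x) - b (w x)) Ω volume)
    (hgrad_int : IntegrableOn (fun x => gradient v x - gradient w x) Ω volume)
    (ha_int : ∀ k : ℝ, 0 < k → IntegrableOn
      (fun x => (inner ℝ (a (gradient v x) - a (gradient w x))
        (gradient v x - gradient w x) : ℝ))
      {x ∈ Ω | |v x - w x| ≤ k} volume)
    (hK_int : ∀ k : ℝ, 0 < k → IntegrableOn
      (fun x => (inner ℝ (K (v x) - K (w x)) (gradient v x - gradient w x) : ℝ))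
      {x ∈ Ω | |v x - w x| ≤ k} volume)
    (htest : ∀ k : ℝ, 0 < k →
      ∫ x in Ω, (b (v x) - b (w x)) * max (-k) (min k (v x - w x)) =
        -τ * (∫ x in {x ∈ Ω | |v x - w x| ≤ k},
            (inner ℝ (a (gradient v x) - a (gradient w x))
              (gradient v x - gradient w x) : ℝ))
          - τ * ∫ x in {x ∈ Ω | |v x - w x| ≤ k},
              (inner ℝ (K (v x) - K (w x)) (gradient v x - gradient w x) : ℝ)) :
    ∀ᵐ x ∂(volume.restrict Ω), v x = w x :=
  stmt_3_general Ω b₀ ν₁ τ hb₀ hτ b hb' a ha_mono K hK v w hvw_int hbvw_int hgrad_int htest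
end

section
/- Let Ω ⊆ ℝ^d be a bounded open set, φ a Musielak function on Ω, and let constants b₀, b₁, ν, ν₀, λ > 0 with b₁ = 2 b₀ and ν b₀ − 2 b₁ ν₀ > 0 be given. Let b : ℝ → ℝ be differentiable with b₀ < b'(s) < b₁ for all s. Let a : Ω × ℝ^d → ℝ^d satisfy the coercivity a(x,ξ)·ξ ≥ ν φ(x,|ξ|) for all ξ ∈ ℝ^d and a.e. x ∈ Ω, and let K : ℝ → ℝ^d satisfy the pointwise bound |K(s)·ξ| ≤ ν₀ (φ(x, |s|/λ) + φ(x, |ξ|)) for all s ∈ ℝ, ξ ∈ ℝ^d and a.e. x ∈ Ω. Let N ∈ ℕ, τ = T/N > 0, f₁, …, f_N ∈ L²(Ω), and let u⁰, u¹, …, u^N : Ω → ℝ be differentiable functions with b(u^n) ∈ L²(Ω) and ∫_Ω φ(x, |∇u^n(x)|) dx < ∞ for each n, satisfying for each n the Poincaré-type modular inequality ∫_Ω φ(x, |u^n(x)|/λ) dx ≤ ∫_Ω φ(x, |∇u^n(x)|) dx, and the tested discrete scheme: for n = 1, …, N, ∫_Ω (b(u^n) − b(u^{n−1})) b(u^n)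 dx + τ ∫_Ω b'(u^n) a(x, ∇u^n)·∇u^n dx + τ ∫_Ω b'(u^n) K(u^n)·∇u^n dx = τ ∫_Ω f_n b(u^n) dx, where all integrals above are finite. Then for every n = 1, …, N: ‖b(u^n)‖²_{L²(Ω)} + Σ_{j=1}^{n} ‖b(u^j) − b(u^{j−1})‖²_{L²(Ω)} + 2τ (ν b₀ − 2 b₁ ν₀) Σ_{j=1}^{n} ∫_Ω φ(x, |∇u^j(x)|) dx ≤ 8 ( (Σ_{j=1}^{N} τ ‖f_j‖_{L²(Ω)})² + ‖b(u⁰)‖²_{L²(Ω)} ). -/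
/-!
Testing the scheme with `b(uⁿ)` gives, at each step, the identity
`∫ (b(uʲ) − b(uʲ⁻¹)) b(uʲ) = ½ (‖b(uʲ)‖² − ‖b(uʲ⁻¹)‖² + ‖b(uʲ) − b(uʲ⁻¹)‖²)`;
the diffusion term is bounded below by `ν b₀ ∫ φ(x, |∇uʲ|)` through coercivity, the convection
term in absolute value by `2 b₁ ν₀ ∫ φ(x, |∇uʲ|)` through the bound on `K` and the modular
Poincaré inequality, and the source term by Cauchy–Schwarz. Summing the resulting one-step
inequalities and comparing with the largest of the `‖b(uʲ)‖` closes the estimate.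
-/

open MeasureTheory Filter

section Integral

variable {X : Type*} [MeasurableSpace X] {μ : Measure X}

lemma integral_mul_eq_inner_toLp {f g : X → ℝ} (hf : MemLp f 2 μ) (hg : MemLp g 2 μ) :
    ∫ x, f x * g x ∂μ = inner ℝ (hf.toLp f) (hg.toLp g) := by
  rw [L2.inner_def]
  refine integral_congr_ae ?_
  filter_upwards [hf.coeFn_toLp, hg.coeFn_toLp] with x hfx hgx
  simp [hfx, hgx, mul_comm]

lemma integral_mul_le_eLpNorm_mul_eLpNorm {f g : X → ℝ} (hf : MemLp f 2 μ) (hg : MemLp g 2 μ) :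
    ∫ x, f x * g x ∂μ ≤ (eLpNorm f 2 μ).toReal * (eLpNorm g 2 μ).toReal := by
  rw [integral_mul_eq_inner_toLp hf hg, ← Lp.norm_toLp f hf, ← Lp.norm_toLp g hg]
  exact real_inner_le_norm _ _

lemma integral_sub_mul_eq {v w : X → ℝ} (hv : MemLp v 2 μ) (hw : MemLp w 2 μ) :
    ∫ x, (v x - w x) * v x ∂μ =
      ((eLpNorm v 2 μ).toReal ^ 2 - (eLpNorm w 2 μ).toReal ^ 2
        + (eLpNorm (fun x => v x - w x) 2 μ).toReal ^ 2) / 2 := by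
  have hvw : MemLp (v - w) 2 μ := hv.sub hw
  rw [show (fun x => v x - w x) = v - w from rfl,
    show ∫ x, (v x - w x) * v x ∂μ = _ from integral_mul_eq_inner_toLp hvw hv,
    ← Lp.norm_toLp v hv, ← Lp.norm_toLp w hw, ← Lp.norm_toLp _ hvw, MemLp.toLp_sub hv hw,
    inner_sub_left, norm_sub_sq_real, real_inner_self_eq_norm_sq, real_inner_comm]
  ring

lemma mul_integral_le_integral_mul {w g p : X → ℝ} {β ν : ℝ} (hβ : 0 ≤ β) (hν : 0 ≤ ν)
    (hw : ∀ x, β ≤ w x) (hp : ∀ x, 0 ≤ p x) (hpi : Integrable p μ)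
    (hwg : Integrable (fun x => w x * g x) μ) (hg : ∀ᵐ x ∂μ, ν * p x ≤ g x) :
    ν * β * ∫ x, p x ∂μ ≤ ∫ x, w x * g x ∂μ := by
  rw [← integral_const_mul]
  refine integral_mono_ae (hpi.const_mul _) hwg ?_
  filter_upwards [hg] with x hx
  have hg0 : 0 ≤ g x := (mul_nonneg hν (hp x)).trans hx
  calc ν * β * p x = β * (ν * p x) := by ring
    _ ≤ β * g x := mul_le_mul_of_nonneg_left hx hβ
    _ ≤ w x * g x := mul_le_mul_of_nonneg_right (hw x) hg0

/-- The integral of `A` need not exist: it is controlled only through `∫⁻`, as in a modular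
Poincaré inequality. -/
lemma abs_integral_le_two_mul_integral {g A B : X → ℝ} {C : ℝ} (hC : 0 ≤ C)
    (hB : ∀ x, 0 ≤ B x) (hBi : Integrable B μ) (hg : ∀ᵐ x ∂μ, |g x| ≤ C * (A x + B x))
    (hAB : ∫⁻ x, ENNReal.ofReal (A x) ∂μ ≤ ∫⁻ x, ENNReal.ofReal (B x) ∂μ) :
    |∫ x, g x ∂μ| ≤ 2 * C * ∫ x, B x ∂μ := by
  have hbound : ∫⁻ x, ENNReal.ofReal ‖g x‖ ∂μ ≤ ENNReal.ofReal (2 * C * ∫ x, B x ∂μ) :=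
    calc ∫⁻ x, ENNReal.ofReal ‖g x‖ ∂μ
        ≤ ∫⁻ x, ENNReal.ofReal C * (ENNReal.ofReal (A x) + ENNReal.ofReal (B x)) ∂μ := by
          refine lintegral_mono_ae ?_
          filter_upwards [hg] with x hx
          calc ENNReal.ofReal ‖g x‖ ≤ ENNReal.ofReal C * ENNReal.ofReal (A x + B x) := by
                rw [← ENNReal.ofReal_mul hC]
                exact ENNReal.ofReal_le_ofReal hx
            _ ≤ _ := by gcongr; exact ENNReal.ofReal_add_le
      _ = ENNReal.ofReal C *
            (∫⁻ x, ENNReal.ofReal (A x) ∂μ + ∫⁻ x, ENNReal.ofReal (B x) ∂μ) := by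
          rw [lintegral_const_mul' _ _ ENNReal.ofReal_ne_top,
            lintegral_add_right' _ hBi.aemeasurable.ennreal_ofReal]
      _ ≤ ENNReal.ofReal C * (2 * ∫⁻ x, ENNReal.ofReal (B x) ∂μ) := by
          gcongr
          rw [two_mul]
          gcongr
      _ = ENNReal.ofReal (2 * C * ∫ x, B x ∂μ) := by
          rw [← ofReal_integral_eq_lintegral_ofReal hBi (Eventually.of_forall hB),
            ← ENNReal.ofReal_ofNat 2, ← ENNReal.ofReal_mul zero_le_two,
            ← ENNReal.ofReal_mul hC]
          ring_nf
  rw [← Real.norm_eq_abs]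
  exact (norm_integral_le_lintegral_norm g).trans
    (ENNReal.toReal_le_of_le_ofReal
      (mul_nonneg (mul_nonneg zero_le_two hC) (integral_nonneg (μ := μ) (f := B) hB)) hbound)

lemma sq_sub_sq_add_le_of_tested_step {v w f : X → ℝ} (hv : MemLp v 2 μ) (hw : MemLp w 2 μ)
    (hf : MemLp f 2 μ) {τ A B P c₁ c₂ : ℝ} (hτ : 0 ≤ τ) (hA : c₁ * P ≤ A) (hB : |B| ≤ c₂ * P)
    (h : ∫ x, (v x - w x) * v x ∂μ + τ * A + τ * B = τ * ∫ x, f x * v x ∂μ) :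
    (eLpNorm v 2 μ).toReal ^ 2 - (eLpNorm w 2 μ).toReal ^ 2
        + ((eLpNorm (fun x => v x - w x) 2 μ).toReal ^ 2 + 2 * τ * (c₁ - c₂) * P)
      ≤ 2 * (τ * (eLpNorm f 2 μ).toReal) * (eLpNorm v 2 μ).toReal := by
  rw [integral_sub_mul_eq hv hw] at h
  have hsrc := mul_le_mul_of_nonneg_left (integral_mul_le_eLpNorm_mul_eLpNorm hf hv) hτ
  have hdiff := mul_le_mul_of_nonneg_left hA hτ
  have hconv := mul_le_mul_of_nonneg_left (neg_le_of_abs_le hB) hτ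
  linarith

end Integral

section Discrete

variable {S F e : ℕ → ℝ} {N : ℕ}

lemma sq_add_sum_le_of_sq_sub_sq_le
    (hstep : ∀ j ∈ Finset.Icc 1 N, S j ^ 2 - S (j - 1) ^ 2 + e j ≤ 2 * F j * S j) :
    ∀ m ≤ N, S m ^ 2 + ∑ j ∈ Finset.Icc 1 m, e j ≤
      S 0 ^ 2 + 2 * ∑ j ∈ Finset.Icc 1 m, F j * S j := by
  intro m
  induction m with
  | zero => simp
  | succ m ih =>
    intro hm
    have hm1 := hstep (m + 1) (Finset.mem_Icc.mpr ⟨by omega, hm⟩)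
    rw [Nat.add_sub_cancel] at hm1
    rw [Finset.sum_Icc_succ_top (by omega), Finset.sum_Icc_succ_top (by omega)]
    linarith [ih (by omega)]

lemma sq_add_sum_le_eight_mul_of_sq_sub_sq_le (hS : ∀ j, 0 ≤ S j) (hF : ∀ j, 0 ≤ F j)
    (he : ∀ j, 0 ≤ e j)
    (hstep : ∀ j ∈ Finset.Icc 1 N, S j ^ 2 - S (j - 1) ^ 2 + e j ≤ 2 * F j * S j) :
    ∀ n ∈ Finset.Icc 1 N, S n ^ 2 + ∑ j ∈ Finset.Icc 1 n, e j ≤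
      8 * ((∑ j ∈ Finset.Icc 1 N, F j) ^ 2 + S 0 ^ 2) := by
  have hsum := sq_add_sum_le_of_sq_sub_sq_le hstep
  obtain ⟨k, hk, hmax⟩ := Finset.exists_max_image (Finset.range (N + 1)) S ⟨0, by simp⟩
  have hkN : k ≤ N := Nat.lt_succ_iff.mp (Finset.mem_range.mp hk)
  have hFS : ∀ m ≤ N, ∑ j ∈ Finset.Icc 1 m, F j * S j ≤ (∑ j ∈ Finset.Icc 1 N, F j) * S k := by
    intro m hm
    calc ∑ j ∈ Finset.Icc 1 m, F j * S j ≤ ∑ j ∈ Finset.Icc 1 m, F j * S k :=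
          Finset.sum_le_sum fun j hj => mul_le_mul_of_nonneg_left (hmax j
            (Finset.mem_range.mpr (Nat.lt_succ_of_le ((Finset.mem_Icc.mp hj).2.trans hm)))) (hF j)
      _ ≤ ∑ j ∈ Finset.Icc 1 N, F j * S k :=
          Finset.sum_le_sum_of_subset_of_nonneg (Finset.Icc_subset_Icc le_rfl hm)
            fun j _ _ => mul_nonneg (hF j) (hS k)
      _ = (∑ j ∈ Finset.Icc 1 N, F j) * S k := (Finset.sum_mul ..).symm
  have hk_sq : S k ^ 2 ≤ S 0 ^ 2 + 2 * ((∑ j ∈ Finset.Icc 1 N, F j) * S k) := by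
    have he_sum := Finset.sum_nonneg fun j (_ : j ∈ Finset.Icc 1 k) => he j
    linarith [hsum k hkN, hFS k hkN]
  intro n hn
  have hnN := (Finset.mem_Icc.mp hn).2
  nlinarith [hsum n hnN, hFS n hnN, sq_nonneg (S k - 4 * ∑ j ∈ Finset.Icc 1 N, F j),
    sq_nonneg (S 0)]

end Discrete

theorem stmt_4_general {d : ℕ} (Ω : Set (EuclideanSpace ℝ (Fin d)))
    (φ : EuclideanSpace ℝ (Fin d) → ℝ → ℝ)
    (hφ_nonneg : ∀ x, ∀ t : ℝ, 0 ≤ t → 0 ≤ φ x t)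
    (b₀ b₁ ν ν₀ lam : ℝ)
    (hb₀ : 0 < b₀) (hb₁ : 0 < b₁) (hν : 0 < ν) (hν₀ : 0 < ν₀)
    (hcoef : 0 < ν * b₀ - 2 * b₁ * ν₀)
    (b : ℝ → ℝ)
    (hb' : ∀ s : ℝ, b₀ < deriv b s ∧ deriv b s < b₁)
    (a : EuclideanSpace ℝ (Fin d) → EuclideanSpace ℝ (Fin d) → EuclideanSpace ℝ (Fin d))
    (ha_coer : ∀ᵐ x ∂(volume.restrict Ω), ∀ ξ : EuclideanSpace ℝ (Fin d),
      ν * φ x ‖ξ‖ ≤ (inner ℝ (a x ξ) ξ : ℝ))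
    (K : ℝ → EuclideanSpace ℝ (Fin d))
    (hK : ∀ᵐ x ∂(volume.restrict Ω), ∀ s : ℝ, ∀ ξ : EuclideanSpace ℝ (Fin d),
      |(inner ℝ (K s) ξ : ℝ)| ≤ ν₀ * (φ x (|s| / lam) + φ x ‖ξ‖))
    (N : ℕ) (T τ : ℝ) (hT : 0 < T) (hτ_def : τ = T / N)
    (f : ℕ → EuclideanSpace ℝ (Fin d) → ℝ)
    (hf : ∀ n ∈ Finset.Icc 1 N, MemLp (f n) 2 (volume.restrict Ω))
    (u : ℕ → EuclideanSpace ℝ (Fin d) → ℝ)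
    (hbu_L2 : ∀ n ≤ N, MemLp (fun x => b (u n x)) 2 (volume.restrict Ω))
    (hmodular_fin : ∀ n ≤ N,
      IntegrableOn (fun x => φ x ‖gradient (u n) x‖) Ω volume)
    (hPoincare : ∀ n ≤ N,
      ∫⁻ x in Ω, ENNReal.ofReal (φ x (|u n x| / lam)) ≤
        ∫⁻ x in Ω, ENNReal.ofReal (φ x ‖gradient (u n) x‖))
    (hint2 : ∀ n ∈ Finset.Icc 1 N, IntegrableOn
      (fun x => deriv b (u n x) * (inner ℝ (a x (gradient (u n) x)) (gradient (u n) x) : ℝ))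
      Ω volume)
    (hscheme : ∀ n ∈ Finset.Icc 1 N,
      (∫ x in Ω, (b (u n x) - b (u (n - 1) x)) * b (u n x))
        + τ * (∫ x in Ω,
            deriv b (u n x) * (inner ℝ (a x (gradient (u n) x)) (gradient (u n) x) : ℝ))
        + τ * (∫ x in Ω,
            deriv b (u n x) * (inner ℝ (K (u n x)) (gradient (u n) x) : ℝ))
      = τ * ∫ x in Ω, f n x * b (u n x)) :
    ∀ n ∈ Finset.Icc 1 N,
      (eLpNorm (fun x => b (u n x)) 2 (volume.restrict Ω)).toReal ^ 2
        + (∑ j ∈ Finset.Icc 1 n,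
            (eLpNorm (fun x => b (u j x) - b (u (j - 1) x)) 2
              (volume.restrict Ω)).toReal ^ 2)
        + 2 * τ * (ν * b₀ - 2 * b₁ * ν₀) *
            ∑ j ∈ Finset.Icc 1 n, ∫ x in Ω, φ x ‖gradient (u j) x‖
      ≤ 8 * ((∑ j ∈ Finset.Icc 1 N,
            τ * (eLpNorm (f j) 2 (volume.restrict Ω)).toReal) ^ 2
          + (eLpNorm (fun x => b (u 0 x)) 2 (volume.restrict Ω)).toReal ^ 2) := by
  have hτ : 0 ≤ τ := hτ_def ▸ div_nonneg hT.le N.cast_nonneg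
  have hstep : ∀ j ∈ Finset.Icc 1 N,
      (eLpNorm (fun x => b (u j x)) 2 (volume.restrict Ω)).toReal ^ 2
        - (eLpNorm (fun x => b (u (j - 1) x)) 2 (volume.restrict Ω)).toReal ^ 2
        + ((eLpNorm (fun x => b (u j x) - b (u (j - 1) x)) 2 (volume.restrict Ω)).toReal ^ 2
          + 2 * τ * (ν * b₀ - 2 * b₁ * ν₀) * ∫ x in Ω, φ x ‖gradient (u j) x‖)
      ≤ 2 * (τ * (eLpNorm (f j) 2 (volume.restrict Ω)).toReal)
          * (eLpNorm (fun x => b (u j x)) 2 (volume.restrict Ω)).toReal := by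
    intro j hj
    have hjN : j ≤ N := (Finset.mem_Icc.mp hj).2
    have hφ_grad : ∀ x, 0 ≤ φ x ‖gradient (u j) x‖ := fun x => hφ_nonneg x _ (norm_nonneg _)
    refine sq_sub_sq_add_le_of_tested_step (hbu_L2 j hjN) (hbu_L2 (j - 1) (by omega)) (hf j hj)
      hτ ?_ ?_ (hscheme j hj)
    · refine mul_integral_le_integral_mul hb₀.le hν.le (fun x => (hb' _).1.le) hφ_grad
        (hmodular_fin j hjN) (hint2 j hj) ?_
      filter_upwards [ha_coer] with x hx using hx _
    · refine (abs_integral_le_two_mul_integral (mul_nonneg hb₁.le hν₀.le) hφ_grad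
        (hmodular_fin j hjN) ?_ (hPoincare j hjN)).trans_eq (by ring)
      filter_upwards [hK] with x hx
      have hb'_abs : |deriv b (u j x)| ≤ b₁ :=
        (abs_of_pos (hb₀.trans (hb' _).1)).le.trans (hb' _).2.le
      rw [abs_mul, mul_assoc]
      exact mul_le_mul hb'_abs (hx _ _) (abs_nonneg _) hb₁.le
  intro n hn
  have key := sq_add_sum_le_eight_mul_of_sq_sub_sq_le (fun _ => ENNReal.toReal_nonneg)
    (fun _ => mul_nonneg hτ ENNReal.toReal_nonneg)
    (fun j => add_nonneg (sq_nonneg _) (mul_nonneg (mul_nonneg (mul_nonneg zero_le_two hτ) hcoef.le)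
      (integral_nonneg fun x => hφ_nonneg x _ (norm_nonneg _)))) hstep n hn
  rwa [Finset.sum_add_distrib, ← Finset.mul_sum, ← add_assoc] at key

/-- A priori estimate for the backward Euler discrete solutions: under the
structural assumptions on `b`, the coercivity of `a`, the modular bound on `K`
and the modular Poincaré inequality, the solutions of the tested discrete
scheme satisfy, for every `n = 1, …, N`,
`‖b(uⁿ)‖₂² + Σ_{j=1}^n ‖b(uʲ) − b(uʲ⁻¹)‖₂² + 2τ(νb₀ − 2b₁ν₀) Σ_{j=1}^n ∫_Ω φ(x,|∇uʲ|)
  ≤ 8((Σ_{j=1}^N τ‖f_j‖₂)² + ‖b(u⁰)‖₂²)`. -/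
theorem stmt_4 {d : ℕ} (Ω : Set (EuclideanSpace ℝ (Fin d)))
    (hΩ_open : IsOpen Ω) (hΩ_bdd : Bornology.IsBounded Ω)
    (φ : EuclideanSpace ℝ (Fin d) → ℝ → ℝ)
    (hφ_meas : ∀ t : ℝ, 0 ≤ t → Measurable fun x => φ x t)
    (hφ_nonneg : ∀ x, ∀ t : ℝ, 0 ≤ t → 0 ≤ φ x t)
    (hφ_conv : ∀ x, ConvexOn ℝ (Set.Ici 0) (φ x))
    (hφ_cont : ∀ x, ContinuousOn (φ x) (Set.Ici 0))
    (hφ_mono : ∀ x, MonotoneOn (φ x) (Set.Ici 0))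
    (hφ_zero : ∀ x, φ x 0 = 0)
    (hφ_pos : ∀ x, ∀ t : ℝ, 0 < t → 0 < φ x t)
    (hφ_lim0 : ∀ x,
      Tendsto (fun t : ℝ => φ x t / t) (nhdsWithin 0 (Set.Ioi 0)) (nhds 0))
    (hφ_limtop : ∀ x, Tendsto (fun t : ℝ => φ x t / t) atTop atTop)
    (b₀ b₁ ν ν₀ lam : ℝ)
    (hb₀ : 0 < b₀) (hb₁ : 0 < b₁) (hν : 0 < ν) (hν₀ : 0 < ν₀) (hlam : 0 < lam)
    (hb₁_eq : b₁ = 2 * b₀) (hcoef : 0 < ν * b₀ - 2 * b₁ * ν₀)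
    (b : ℝ → ℝ) (hb_diff : Differentiable ℝ b)
    (hb' : ∀ s : ℝ, b₀ < deriv b s ∧ deriv b s < b₁)
    (a : EuclideanSpace ℝ (Fin d) → EuclideanSpace ℝ (Fin d) → EuclideanSpace ℝ (Fin d))
    (ha_coer : ∀ᵐ x ∂(volume.restrict Ω), ∀ ξ : EuclideanSpace ℝ (Fin d),
      ν * φ x ‖ξ‖ ≤ (inner ℝ (a x ξ) ξ : ℝ))
    (K : ℝ → EuclideanSpace ℝ (Fin d))
    (hK : ∀ᵐ x ∂(volume.restrict Ω), ∀ s : ℝ, ∀ ξ : EuclideanSpace ℝ (Fin d),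
      |(inner ℝ (K s) ξ : ℝ)| ≤ ν₀ * (φ x (|s| / lam) + φ x ‖ξ‖))
    (N : ℕ) (hN : 1 ≤ N) (T τ : ℝ) (hT : 0 < T) (hτ_def : τ = T / N)
    (f : ℕ → EuclideanSpace ℝ (Fin d) → ℝ)
    (hf : ∀ n ∈ Finset.Icc 1 N, MemLp (f n) 2 (volume.restrict Ω))
    (u : ℕ → EuclideanSpace ℝ (Fin d) → ℝ)
    (hu_diff : ∀ n ≤ N, ∀ x ∈ Ω, DifferentiableAt ℝ (u n) x)
    (hbu_L2 : ∀ n ≤ N, MemLp (fun x => b (u n x)) 2 (volume.restrict Ω))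
    (hmodular_fin : ∀ n ≤ N,
      IntegrableOn (fun x => φ x ‖gradient (u n) x‖) Ω volume)
    (hPoincare : ∀ n ≤ N,
      ∫⁻ x in Ω, ENNReal.ofReal (φ x (|u n x| / lam)) ≤
        ∫⁻ x in Ω, ENNReal.ofReal (φ x ‖gradient (u n) x‖))
    (hint1 : ∀ n ∈ Finset.Icc 1 N, IntegrableOn
      (fun x => (b (u n x) - b (u (n - 1) x)) * b (u n x)) Ω volume)
    (hint2 : ∀ n ∈ Finset.Icc 1 N, IntegrableOn
      (fun x => deriv b (u n x) * (inner ℝ (a x (gradient (u n) x)) (gradient (u n) x) : ℝ))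
      Ω volume)
    (hint3 : ∀ n ∈ Finset.Icc 1 N, IntegrableOn
      (fun x => deriv b (u n x) * (inner ℝ (K (u n x)) (gradient (u n) x) : ℝ)) Ω volume)
    (hint4 : ∀ n ∈ Finset.Icc 1 N, IntegrableOn
      (fun x => f n x * b (u n x)) Ω volume)
    (hscheme : ∀ n ∈ Finset.Icc 1 N,
      (∫ x in Ω, (b (u n x) - b (u (n - 1) x)) * b (u n x))
        + τ * (∫ x in Ω,
            deriv b (u n x) * (inner ℝ (a x (gradient (u n) x)) (gradient (u n) x) : ℝ))
        + τ * (∫ x in Ω,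
            deriv b (u n x) * (inner ℝ (K (u n x)) (gradient (u n) x) : ℝ))
      = τ * ∫ x in Ω, f n x * b (u n x)) :
    ∀ n ∈ Finset.Icc 1 N,
      (eLpNorm (fun x => b (u n x)) 2 (volume.restrict Ω)).toReal ^ 2
        + (∑ j ∈ Finset.Icc 1 n,
            (eLpNorm (fun x => b (u j x) - b (u (j - 1) x)) 2
              (volume.restrict Ω)).toReal ^ 2)
        + 2 * τ * (ν * b₀ - 2 * b₁ * ν₀) *
            ∑ j ∈ Finset.Icc 1 n, ∫ x in Ω, φ x ‖gradient (u j) x‖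
      ≤ 8 * ((∑ j ∈ Finset.Icc 1 N,
            τ * (eLpNorm (f j) 2 (volume.restrict Ω)).toReal) ^ 2
          + (eLpNorm (fun x => b (u 0 x)) 2 (volume.restrict Ω)).toReal ^ 2) :=
  stmt_4_general Ω φ hφ_nonneg b₀ b₁ ν ν₀ lam hb₀ hb₁ hν hν₀ hcoef b hb' a ha_coer K hK N T τ hT
    hτ_def f hf u hbu_L2 hmodular_fin hPoincare hint2 hscheme
end

section
/- Let (Q, μ) be a finite measure space, let a : ℝ^d → ℝ^d be continuous and monotone (i.e. (a(ξ) − a(η))·(ξ − η) ≥ 0 for all ξ, η ∈ ℝ^d), and let G, α : Q → ℝ^d be measurable. Assume: (i) the function z ↦ (a(0) − α(z))·G(z) is μ-integrable; (ii) for every bounded measurable ζ : Q → ℝ^d, the functions z ↦ α(z)·ζ(z), z ↦ a(G(z))·ζ(z) and z ↦ a(G(z) + ζ(z))·ζ(z) are μ-integrable; (iii) for every bounded measurable η : Q → ℝ^d for which z ↦ (a(η(z)) − α(z))·(η(z) − G(z)) is μ-integrable, one has ∫_Q (a(η(z)) − α(z))·(η(z) − G(z)) dμ ≥ 0. Then α(z)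 = a(G(z)) for μ-almost every z ∈ Q. -/
/-!
Minty's trick. Testing with `η = G + s • ζ` (`s > 0`, `ζ` bounded) and dividing by `s` gives
`∫ ⟪a (G + s • ζ) - α, ζ⟫ ≥ 0`; as `G` need not be bounded, `η` is first cut off to `0` outside
`{‖G‖ ≤ i}`, where the integrability of `⟪a 0 - α, G⟫` makes the error vanish as `i → ∞`.
Monotonicity of `a` makes `s ↦ ⟪a (G + s • ζ) - α, ζ⟫` nondecreasing, so dominated convergence
as `s ↓ 0` gives `∫ ⟪a G - α, ζ⟫ ≥ 0` for every bounded `ζ`, and the choice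
`ζ = -(a G - α) / (1 + ‖a G - α‖)` forces `α = a G` almost everywhere.
-/

open MeasureTheory Filter Set Topology
open scoped RealInnerProductSpace

section Limits

variable {Q : Type*} [MeasurableSpace Q] {μ : Measure Q}

theorem integral_nonneg_of_integral_piecewise_nonneg {f g : Q → ℝ} {S : ℕ → Set Q}
    [∀ i, DecidablePred (· ∈ S i)]
    (hS : ∀ i, MeasurableSet (S i)) (hS_cover : ∀ z, ∀ᶠ i in atTop, z ∈ S i)
    (hf : Integrable f μ) (hg : Integrable g μ)
    (h : ∀ i, 0 ≤ ∫ z, (S i).piecewise f g z ∂μ) :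
    0 ≤ ∫ z, f z ∂μ := by
  have hlim : Tendsto (fun i => ∫ z, (S i).piecewise f g z ∂μ) atTop (𝓝 (∫ z, f z ∂μ)) := by
    refine tendsto_integral_of_dominated_convergence (fun z => ‖f z‖ + ‖g z‖)
      (fun i => (Integrable.piecewise (hS i) hf.integrableOn hg.integrableOn).aestronglyMeasurable)
      (hf.norm.add hg.norm) (fun i => ae_of_all _ fun z => ?_) (ae_of_all _ fun z => ?_)
    · by_cases hz : z ∈ S i <;> simp [Set.piecewise, hz]
    · exact tendsto_const_nhds.congr' ((hS_cover z).mono fun i hi => by simp [Set.piecewise, hi])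
  exact ge_of_tendsto' hlim h

theorem integral_nonneg_of_monotone_of_integral_nonneg_right {F : ℝ → Q → ℝ}
    (hF_mono : ∀ z, Monotone fun s => F s z)
    (hF_cont : ∀ z, ContinuousWithinAt (fun s => F s z) (Ioi 0) 0)
    (hF_meas : ∀ s, AEStronglyMeasurable (F s) μ)
    (hF₀ : Integrable (F 0) μ) (hF₁ : Integrable (F 1) μ)
    (h : ∀ s ∈ Ioc (0 : ℝ) 1, 0 ≤ ∫ z, F s z ∂μ) :
    0 ≤ ∫ z, F 0 z ∂μ := by
  have hs : ∀ᶠ s in 𝓝[>] (0 : ℝ), s ∈ Ioc (0 : ℝ) 1 := Ioc_mem_nhdsGT zero_lt_one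
  have hlim : Tendsto (fun s => ∫ z, F s z ∂μ) (𝓝[>] 0) (𝓝 (∫ z, F 0 z ∂μ)) := by
    refine tendsto_integral_filter_of_dominated_convergence (fun z => max |F 0 z| |F 1 z|)
      (Eventually.of_forall hF_meas) (hs.mono fun s hs => ae_of_all _ fun z => ?_)
      (hF₀.abs.sup hF₁.abs) (ae_of_all _ hF_cont)
    exact abs_le_max_abs_abs (hF_mono z hs.1.le) (hF_mono z hs.2)
  exact ge_of_tendsto hlim (hs.mono h)

end Limits

section Monotone

variable {E : Type*} [NormedAddCommGroup E] [InnerProductSpace ℝ E]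

theorem monotone_inner_apply_add_smul {a : E → E} (ha : ∀ ξ η, 0 ≤ ⟪a ξ - a η, ξ - η⟫)
    (x v : E) : Monotone fun s : ℝ => ⟪a (x + s • v), v⟫ := by
  intro s t hst
  rcases hst.eq_or_lt with rfl | hlt
  · exact le_rfl
  have h := ha (x + t • v) (x + s • v)
  rw [add_sub_add_left_eq_sub, ← sub_smul, inner_smul_right] at h
  have := nonneg_of_mul_nonneg_right h (sub_pos.mpr hlt)
  rwa [inner_sub_left, sub_nonneg] at this

end Monotone

section Minty

variable {Q E : Type*} [MeasurableSpace Q] {μ : Measure Q}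
  [NormedAddCommGroup E] [InnerProductSpace ℝ E]
  [MeasurableSpace E] [BorelSpace E] [SecondCountableTopology E]

theorem integral_inner_apply_add_sub_nonneg {a : E → E} {G α ζ : Q → E}
    (hG : Measurable G) (hζ : Measurable ζ) (hζ_bdd : ∃ M, ∀ z, ‖ζ z‖ ≤ M)
    (h_int₀ : Integrable (fun z => ⟪a 0 - α z, G z⟫) μ)
    (h_int : Integrable (fun z => ⟪a (G z + ζ z) - α z, ζ z⟫) μ)
    (h_test : ∀ η : Q → E, Measurable η → (∃ M : ℝ, ∀ z, ‖η z‖ ≤ M) →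
      Integrable (fun z => ⟪a (η z) - α z, η z - G z⟫) μ →
      0 ≤ ∫ z, ⟪a (η z) - α z, η z - G z⟫ ∂μ) :
    0 ≤ ∫ z, ⟪a (G z + ζ z) - α z, ζ z⟫ ∂μ := by
  classical
  obtain ⟨M, hM⟩ := hζ_bdd
  set S : ℕ → Set Q := fun i => {z | ‖G z‖ ≤ i}
  have hS : ∀ i, MeasurableSet (S i) := fun i => measurableSet_le hG.norm measurable_const
  have hS_cover : ∀ z, ∀ᶠ i in atTop, z ∈ S i := fun z =>
    (tendsto_natCast_atTop_atTop.eventually_ge_atTop ‖G z‖ : ∀ᶠ i : ℕ in atTop, ‖G z‖ ≤ i)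
  have h_int₀' : Integrable (fun z => ⟪a 0 - α z, 0 - G z⟫) μ := by
    simpa [inner_neg_right] using h_int₀.neg
  refine integral_nonneg_of_integral_piecewise_nonneg hS hS_cover h_int h_int₀' fun i => ?_
  set η : Q → E := (S i).piecewise (fun z => G z + ζ z) 0
  have hη : (fun z => ⟪a (η z) - α z, η z - G z⟫) = (S i).piecewise
      (fun z => ⟪a (G z + ζ z) - α z, ζ z⟫) (fun z => ⟪a 0 - α z, 0 - G z⟫) := by
    ext z
    by_cases hz : z ∈ S i <;> simp [η, Set.piecewise, hz]
  have hη_bdd : ∀ z, ‖η z‖ ≤ i + M := fun z => by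
    by_cases hz : z ∈ S i
    · simp only [η, Set.piecewise, hz, if_true]
      exact (norm_add_le _ _).trans (add_le_add hz (hM z))
    · simp only [η, Set.piecewise, hz, if_false, Pi.zero_apply, norm_zero]
      linarith [norm_nonneg (ζ z), hM z, (Nat.cast_nonneg i : (0 : ℝ) ≤ i)]
  rw [← hη]
  refine h_test η (Measurable.piecewise (hS i) (hG.add hζ) measurable_const) ⟨i + M, hη_bdd⟩ ?_
  rw [hη]
  exact Integrable.piecewise (hS i) h_int.integrableOn h_int₀'.integrableOn

theorem integral_inner_apply_sub_nonneg {a : E → E} (ha_cont : Continuous a)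
    (ha_mono : ∀ ξ η, 0 ≤ ⟪a ξ - a η, ξ - η⟫) {G α ζ : Q → E}
    (hG : Measurable G) (hα : Measurable α) (hζ : Measurable ζ) (hζ_bdd : ∃ M, ∀ z, ‖ζ z‖ ≤ M)
    (h_int₀ : Integrable (fun z => ⟪a 0 - α z, G z⟫) μ)
    (h_int : Integrable (fun z => ⟪a (G z) - α z, ζ z⟫) μ)
    (h_int₁ : Integrable (fun z => ⟪a (G z + ζ z) - α z, ζ z⟫) μ)
    (h_test : ∀ η : Q → E, Measurable η → (∃ M : ℝ, ∀ z, ‖η z‖ ≤ M) →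
      Integrable (fun z => ⟪a (η z) - α z, η z - G z⟫) μ →
      0 ≤ ∫ z, ⟪a (η z) - α z, η z - G z⟫ ∂μ) :
    0 ≤ ∫ z, ⟪a (G z) - α z, ζ z⟫ ∂μ := by
  set F : ℝ → Q → ℝ := fun s z => ⟪a (G z + s • ζ z) - α z, ζ z⟫
  have hF₀ : Integrable (F 0) μ := by simpa [F] using h_int
  have hF₁ : Integrable (F 1) μ := by simpa [F] using h_int₁
  have hF_mono : ∀ z, Monotone fun s => F s z := fun z s t hst => by
    simpa [F, inner_sub_left] using monotone_inner_apply_add_smul ha_mono (G z) (ζ z) hst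
  have hF_meas : ∀ s, AEStronglyMeasurable (F s) μ := fun s =>
    (((ha_cont.measurable.comp (hG.add (hζ.const_smul s))).sub hα).inner hζ).aestronglyMeasurable
  have hF_cont : ∀ z, ContinuousWithinAt (fun s => F s z) (Ioi 0) 0 := fun z => by fun_prop
  suffices 0 ≤ ∫ z, F 0 z ∂μ by simpa [F] using this
  refine integral_nonneg_of_monotone_of_integral_nonneg_right hF_mono hF_cont hF_meas hF₀ hF₁
    fun s hs => ?_
  have hF_int : Integrable (F s) μ :=
    integrable_of_le_of_le (hF_meas s) (ae_of_all _ fun z => hF_mono z hs.1.le)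
      (ae_of_all _ fun z => hF_mono z hs.2) hF₀ hF₁
  obtain ⟨M, hM⟩ := hζ_bdd
  have hsζ_bdd : ∃ M, ∀ z, ‖s • ζ z‖ ≤ M := ⟨s * M, fun z => by
    rw [norm_smul, Real.norm_of_nonneg hs.1.le]
    exact mul_le_mul_of_nonneg_left (hM z) hs.1.le⟩
  have h := integral_inner_apply_add_sub_nonneg (ζ := fun z => s • ζ z) hG (hζ.const_smul s)
    hsζ_bdd h_int₀ (by simpa [F, inner_smul_right] using hF_int.const_mul s) h_test
  simp only [inner_smul_right, integral_const_mul] at h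
  exact nonneg_of_mul_nonneg_right h hs.1

theorem ae_eq_zero_of_integral_inner_nonneg {F : Q → E} (hF : Measurable F)
    (h : ∀ ζ : Q → E, Measurable ζ → (∀ z, ‖ζ z‖ ≤ 1) →
      Integrable (fun z => ⟪F z, ζ z⟫) μ ∧ 0 ≤ ∫ z, ⟪F z, ζ z⟫ ∂μ) :
    F =ᵐ[μ] 0 := by
  set ζ : Q → E := fun z => -(1 + ‖F z‖)⁻¹ • F z
  have hζ_norm : ∀ z, ‖ζ z‖ ≤ 1 := fun z => by
    have hpos : 0 < 1 + ‖F z‖ := by positivity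
    simp only [ζ, norm_neg, norm_smul, norm_inv, Real.norm_of_nonneg hpos.le]
    rw [inv_mul_le_iff₀ hpos]
    linarith
  obtain ⟨hint, hnonneg⟩ := h ζ (by fun_prop) hζ_norm
  set φ : Q → ℝ := fun z => (1 + ‖F z‖)⁻¹ * ‖F z‖ ^ 2
  have hφ : (fun z => ⟪F z, ζ z⟫) = fun z => -φ z := by
    ext z
    simp [ζ, φ, inner_neg_right, inner_smul_right]
  rw [hφ] at hint hnonneg
  have hφ_nonneg : 0 ≤ φ := fun z => by positivity
  have hφ_zero : φ =ᵐ[μ] 0 := by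
    rw [← integral_eq_zero_iff_of_nonneg hφ_nonneg (by simpa using hint.neg)]
    rw [integral_neg, neg_nonneg] at hnonneg
    exact le_antisymm hnonneg (integral_nonneg hφ_nonneg)
  filter_upwards [hφ_zero] with z hz
  simpa [φ, (by positivity : 1 + ‖F z‖ ≠ 0)] using hz

end Minty

theorem stmt_9_general {Q : Type*} [MeasurableSpace Q] (μ : Measure Q)
    {d : ℕ} (a : EuclideanSpace ℝ (Fin d) → EuclideanSpace ℝ (Fin d))
    (ha_cont : Continuous a)
    (ha_mono : ∀ ξ η : EuclideanSpace ℝ (Fin d), 0 ≤ (inner ℝ (a ξ - a η) (ξ - η) : ℝ))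
    (G α : Q → EuclideanSpace ℝ (Fin d))
    (hG : Measurable G) (hα : Measurable α)
    (h1 : Integrable (fun z => (inner ℝ (a 0 - α z) (G z) : ℝ)) μ)
    (h2 : ∀ ζ : Q → EuclideanSpace ℝ (Fin d), Measurable ζ → (∃ M : ℝ, ∀ z, ‖ζ z‖ ≤ M) →
      Integrable (fun z => (inner ℝ (α z) (ζ z) : ℝ)) μ ∧
      Integrable (fun z => (inner ℝ (a (G z)) (ζ z) : ℝ)) μ ∧
      Integrable (fun z => (inner ℝ (a (G z + ζ z)) (ζ z) : ℝ)) μ)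
    (h3 : ∀ η : Q → EuclideanSpace ℝ (Fin d), Measurable η → (∃ M : ℝ, ∀ z, ‖η z‖ ≤ M) →
      Integrable (fun z => (inner ℝ (a (η z) - α z) (η z - G z) : ℝ)) μ →
      0 ≤ ∫ z, (inner ℝ (a (η z) - α z) (η z - G z) : ℝ) ∂μ) :
    ∀ᵐ z ∂μ, α z = a (G z) := by
  have h_weak : ∀ ζ : Q → EuclideanSpace ℝ (Fin d), Measurable ζ → (∀ z, ‖ζ z‖ ≤ 1) →
      Integrable (fun z => ⟪a (G z) - α z, ζ z⟫) μ ∧ 0 ≤ ∫ z, ⟪a (G z) - α z, ζ z⟫ ∂μ := by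
    intro ζ hζ hζ_norm
    obtain ⟨hα_int, haG_int, haGζ_int⟩ := h2 ζ hζ ⟨1, hζ_norm⟩
    have h_int : Integrable (fun z => ⟪a (G z) - α z, ζ z⟫) μ := by
      simpa only [inner_sub_left, Pi.sub_def] using haG_int.sub hα_int
    have h_int₁ : Integrable (fun z => ⟪a (G z + ζ z) - α z, ζ z⟫) μ := by
      simpa only [inner_sub_left, Pi.sub_def] using haGζ_int.sub hα_int
    exact ⟨h_int, integral_inner_apply_sub_nonneg ha_cont ha_mono hG hα hζ ⟨1, hζ_norm⟩ h1
      h_int h_int₁ h3⟩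
  have h_ae := ae_eq_zero_of_integral_inner_nonneg ((ha_cont.measurable.comp hG).sub hα) h_weak
  filter_upwards [h_ae] with z hz
  exact (sub_eq_zero.mp hz).symm

/-- Minty's monotonicity trick: if `a : ℝ^d → ℝ^d` is continuous and monotone,
`G, α : Q → ℝ^d` are measurable on a finite measure space, the relevant
integrability conditions hold, and
`∫_Q (a(η) − α)·(η − G) dμ ≥ 0` for every bounded measurable `η` making the
integrand integrable, then `α = a(G)` almost everywhere. -/
theorem stmt_9 {Q : Type*} [MeasurableSpace Q] (μ : Measure Q) [IsFiniteMeasure μ]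
    {d : ℕ} (a : EuclideanSpace ℝ (Fin d) → EuclideanSpace ℝ (Fin d))
    (ha_cont : Continuous a)
    (ha_mono : ∀ ξ η : EuclideanSpace ℝ (Fin d), 0 ≤ (inner ℝ (a ξ - a η) (ξ - η) : ℝ))
    (G α : Q → EuclideanSpace ℝ (Fin d))
    (hG : Measurable G) (hα : Measurable α)
    (h1 : Integrable (fun z => (inner ℝ (a 0 - α z) (G z) : ℝ)) μ)
    (h2 : ∀ ζ : Q → EuclideanSpace ℝ (Fin d), Measurable ζ → (∃ M : ℝ, ∀ z, ‖ζ z‖ ≤ M) →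
      Integrable (fun z => (inner ℝ (α z) (ζ z) : ℝ)) μ ∧
      Integrable (fun z => (inner ℝ (a (G z)) (ζ z) : ℝ)) μ ∧
      Integrable (fun z => (inner ℝ (a (G z + ζ z)) (ζ z) : ℝ)) μ)
    (h3 : ∀ η : Q → EuclideanSpace ℝ (Fin d), Measurable η → (∃ M : ℝ, ∀ z, ‖η z‖ ≤ M) →
      Integrable (fun z => (inner ℝ (a (η z) - α z) (η z - G z) : ℝ)) μ →
      0 ≤ ∫ z, (inner ℝ (a (η z) - α z) (η z - G z) : ℝ) ∂μ) :
    ∀ᵐ z ∂μ, α z = a (G z) :=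
  stmt_9_general μ a ha_cont ha_mono G α hG hα h1 h2 h3
end

section
/- Let (Ω, μ) be a measure space, ν₁ > 0, and let K : ℝ → ℝ^d satisfy |K(s) − K(s')| ≤ ν₁ |s − s'| for all s, s' ∈ ℝ. Let v, w : Ω → ℝ be measurable and let G : Ω → ℝ^d be μ-integrable. Then lim_{k→0⁺} (1/k) ∫_{{x : |v(x) − w(x)| ≤ k}} (K(v(x)) − K(w(x)))·G(x) dμ = 0. -/
/-!
On `{|g| ≤ k}` the bound `‖F‖ ≤ |g| b` gives `‖k⁻¹ F‖ ≤ |b|`, an integrable majorant independent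
of `k`, and for each fixed `x` the integrand `k⁻¹ 1_{|g| ≤ k} F` vanishes once `k < |g x|` (and
identically where `g x = 0`, since then `F x = 0`). Dominated convergence finishes the proof.
-/

open MeasureTheory Filter Topology

theorem tendsto_inv_smul_setIntegral_abs_le_nhdsGT_zero {Ω E : Type*} [MeasurableSpace Ω]
    {μ : Measure Ω} [NormedAddCommGroup E] [NormedSpace ℝ E] {g b : Ω → ℝ} {F : Ω → E}
    (hg : Measurable g) (hF : AEStronglyMeasurable F μ) (hb : Integrable b μ)
    (hFb : ∀ᵐ x ∂μ, ‖F x‖ ≤ |g x| * b x) :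
    Tendsto (fun k : ℝ => k⁻¹ • ∫ x in {x | |g x| ≤ k}, F x ∂μ) (𝓝[>] 0) (𝓝 0) := by
  have hS : ∀ k : ℝ, MeasurableSet {x | |g x| ≤ k} := fun k => hg.abs measurableSet_Iic
  have h_eq : ∀ k : ℝ, k⁻¹ • ∫ x in {x | |g x| ≤ k}, F x ∂μ
      = ∫ x, {x | |g x| ≤ k}.indicator (fun x => k⁻¹ • F x) x ∂μ := fun k => by
    rw [integral_indicator (hS k), integral_smul]
  simp_rw [h_eq]
  rw [← integral_zero Ω E]
  refine tendsto_integral_filter_of_dominated_convergence (fun x => |b x|)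
    (Eventually.of_forall fun k => (hF.const_smul k⁻¹).indicator (hS k)) ?_ hb.abs ?_
  · filter_upwards [self_mem_nhdsWithin] with k (hk : 0 < k)
    filter_upwards [hFb] with x hx
    by_cases hxk : x ∈ {x | |g x| ≤ k}
    · rw [Set.indicator_of_mem hxk, norm_smul, Real.norm_of_nonneg (inv_nonneg.2 hk.le),
        inv_mul_le_iff₀ hk]
      calc ‖F x‖ ≤ |g x| * b x := hx
        _ ≤ |g x| * |b x| := mul_le_mul_of_nonneg_left (le_abs_self _) (abs_nonneg _)
        _ ≤ k * |b x| := mul_le_mul_of_nonneg_right (α := ℝ) hxk (abs_nonneg _)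
    · rw [Set.indicator_of_notMem hxk, norm_zero]
      exact abs_nonneg _
  · filter_upwards [hFb] with x hx
    refine tendsto_const_nhds.congr' ?_
    rcases eq_or_ne (g x) 0 with hgx | hgx
    · have hFx : F x = 0 := norm_le_zero_iff.1 (by simpa [hgx] using hx)
      exact Eventually.of_forall fun k =>
        (Set.indicator_apply_eq_zero.2 fun _ => by rw [hFx, smul_zero]).symm
    · filter_upwards [Ioo_mem_nhdsGT (abs_pos.2 hgx)] with k hk
      exact (Set.indicator_of_notMem (s := {x | |g x| ≤ k}) (not_le.2 hk.2) _).symm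

theorem stmt_11_general {Ω : Type*} [MeasurableSpace Ω] (μ : Measure Ω) {d : ℕ}
    (ν₁ : ℝ) (K : ℝ → EuclideanSpace ℝ (Fin d))
    (hK : ∀ s s' : ℝ, ‖K s - K s'‖ ≤ ν₁ * |s - s'|)
    (v w : Ω → ℝ) (hv : Measurable v) (hw : Measurable w)
    (G : Ω → EuclideanSpace ℝ (Fin d)) (hG : Integrable G μ) :
    Tendsto (fun k : ℝ =>
        (1 / k) * ∫ x in {x : Ω | |v x - w x| ≤ k}, (inner ℝ (K (v x) - K (w x)) (G x) : ℝ) ∂μ)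
      (nhdsWithin 0 (Set.Ioi 0)) (nhds 0) := by
  have hKc : Continuous K :=
    (LipschitzWith.of_dist_le' fun s s' => by simpa [dist_eq_norm] using hK s s').continuous
  have hF : AEStronglyMeasurable (fun x => (inner ℝ (K (v x) - K (w x)) (G x) : ℝ)) μ :=
    (((hKc.measurable.comp hv).sub (hKc.measurable.comp hw)).aestronglyMeasurable).inner hG.1
  have hFb : ∀ x, ‖(inner ℝ (K (v x) - K (w x)) (G x) : ℝ)‖ ≤ |v x - w x| * (ν₁ * ‖G x‖) :=
    fun x => calc
      ‖(inner ℝ (K (v x) - K (w x)) (G x) : ℝ)‖ ≤ ‖K (v x) - K (w x)‖ * ‖G x‖ :=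
        norm_inner_le_norm _ _
      _ ≤ ν₁ * |v x - w x| * ‖G x‖ := mul_le_mul_of_nonneg_right (hK _ _) (norm_nonneg _)
      _ = |v x - w x| * (ν₁ * ‖G x‖) := by ring
  simpa only [one_div, smul_eq_mul] using
    tendsto_inv_smul_setIntegral_abs_le_nhdsGT_zero (g := fun x => v x - w x) (hv.sub hw) hF
      (hG.norm.const_mul ν₁) (Eventually.of_forall hFb)

/-- If `K : ℝ → ℝ^d` is Lipschitz with constant `ν₁`, `v, w` are measurable and
`G ∈ L¹(Ω; ℝ^d)`, then
`(1/k) ∫_{{|v−w| ≤ k}} (K(v) − K(w))·G dμ → 0` as `k → 0⁺`. -/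
theorem stmt_11 {Ω : Type*} [MeasurableSpace Ω] (μ : Measure Ω) {d : ℕ}
    (ν₁ : ℝ) (hν₁ : 0 < ν₁) (K : ℝ → EuclideanSpace ℝ (Fin d))
    (hK : ∀ s s' : ℝ, ‖K s - K s'‖ ≤ ν₁ * |s - s'|)
    (v w : Ω → ℝ) (hv : Measurable v) (hw : Measurable w)
    (G : Ω → EuclideanSpace ℝ (Fin d)) (hG : Integrable G μ) :
    Tendsto (fun k : ℝ =>
        (1 / k) * ∫ x in {x : Ω | |v x - w x| ≤ k}, (inner ℝ (K (v x) - K (w x)) (G x) : ℝ) ∂μ)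
      (nhdsWithin 0 (Set.Ioi 0)) (nhds 0) :=
  stmt_11_general μ ν₁ K hK v w hv hw G hG
end

section
/- Let (Ω, μ) be a σ-finite measure space, T > 0, and let w : [0,T] × Ω → ℝ be measurable such that: for μ-almost every x ∈ Ω the function t ↦ w(t, x) is absolutely continuous on [0,T] with pointwise a.e. derivative ∂_t w; ∂_t w is integrable on (0,T) × Ω; and w(0, ·) ∈ L¹(Ω, μ). Then for every t̄ ∈ [0,T], w(t̄, ·) ∈ L¹(Ω, μ) and ∫_Ω |w(t̄, x)| dμ = ∫_Ω |w(0, x)| dμ + ∫₀^{t̄} ∫_Ω sgn(w(t, x)) ∂_t w(t, x) dμ dt, where sgn(r) = r/|r| for r ≠ 0 and sgn(0) = 0. -/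
/-!
For a.e. `x`, the function `t ↦ w(t,x)` is absolutely continuous, hence so is `t ↦ |w(t,x)|`,
and the fundamental theorem of calculus for absolutely continuous functions applies to it.
Its a.e. derivative is `sgn(w) ∂ₜw`: off the zero set of `w` by the chain rule, and on it because
`|w(·,x)|` attains its minimum there. Integrating the resulting pointwise identity over `Ω` and
exchanging the order of integration (Fubini, with `|sgn| ≤ 1`) gives the claim; the same identity
exhibits `|w(t̄,·)|` as a sum of two integrable functions.
-/

open MeasureTheory Set Filter
open scoped Interval

namespace Real

theorem measurable_sign : Measurable Real.sign :=
  measurable_const.ite measurableSet_Iio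
    (measurable_const.ite measurableSet_Ioi measurable_const)

theorem abs_sign_le_one (r : ℝ) : |Real.sign r| ≤ 1 := by
  rcases sign_apply_eq r with h | h | h <;> simp [h]

theorem sign_eq_coe_sign (r : ℝ) : Real.sign r = (SignType.sign r : ℝ) := by
  rcases lt_trichotomy r 0 with h | rfl | h
  · simp [sign_of_neg h, h]
  · simp [sign_zero]
  · simp [sign_of_pos h, h]

end Real

theorem deriv_abs_comp {f : ℝ → ℝ} {f' x : ℝ} (hf : HasDerivAt f f' x) :
    deriv (fun y => |f y|) x = Real.sign (f x) * f' := by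
  rcases eq_or_ne (f x) 0 with h | h
  · have hmin : IsLocalMin (fun y => |f y|) x := Eventually.of_forall fun y => by simp [h]
    rw [hmin.deriv_eq_zero, h, Real.sign_zero, zero_mul]
  · rw [Real.sign_eq_coe_sign]
    exact ((hasDerivAt_abs h).comp x hf).deriv

theorem LipschitzWith.comp_absolutelyContinuousOnInterval {X Y : Type*} [PseudoMetricSpace X]
    [PseudoMetricSpace Y] {g : X → Y} {K : NNReal} (hg : LipschitzWith K g) {f : ℝ → X}
    {a b : ℝ} (hf : AbsolutelyContinuousOnInterval f a b) :
    AbsolutelyContinuousOnInterval (g ∘ f) a b := by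
  unfold AbsolutelyContinuousOnInterval at hf ⊢
  have hK := hf.const_mul (K : ℝ)
  rw [mul_zero] at hK
  refine squeeze_zero (fun _ => Finset.sum_nonneg fun _ _ => dist_nonneg) (fun E => ?_) hK
  rw [Finset.mul_sum]
  exact Finset.sum_le_sum fun i _ => hg.dist_le_mul _ _

namespace AbsolutelyContinuousOnInterval

theorem abs {f : ℝ → ℝ} {a b : ℝ} (hf : AbsolutelyContinuousOnInterval f a b) :
    AbsolutelyContinuousOnInterval (fun x => |f x|) a b :=
  (lipschitzWith_one_norm (E := ℝ)).comp_absolutelyContinuousOnInterval (g := fun x => |x|) hf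

theorem integral_sign_mul_deriv {f : ℝ → ℝ} {a b : ℝ}
    (hf : AbsolutelyContinuousOnInterval f a b) :
    ∫ x in a..b, Real.sign (f x) * deriv f x = |f b| - |f a| := by
  rw [← hf.abs.integral_deriv_eq_sub]
  refine intervalIntegral.integral_congr_ae ?_
  filter_upwards [hf.ae_differentiableAt] with x hx hxab
  exact (deriv_abs_comp (hx (uIoc_subset_uIcc hxab)).hasDerivAt).symm

end AbsolutelyContinuousOnInterval

theorem abs_add_intervalIntegral_eq {f : ℝ → ℝ} {a b : ℝ}
    (hf : IntervalIntegrable f volume a b) (c : ℝ) :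
    |c + ∫ t in a..b, f t| = |c| + ∫ t in a..b, Real.sign (c + ∫ s in a..t, f s) * f t := by
  set F : ℝ → ℝ := fun x => c + ∫ t in a..x, f t with hF
  have hF_ac : AbsolutelyContinuousOnInterval F a b :=
    (LipschitzWith.const c).lipschitzOnWith.absolutelyContinuousOnInterval.add
      (hf.absolutelyContinuousOnInterval_intervalIntegral left_mem_uIcc)
  have hF_deriv : ∀ᵐ x, x ∈ Ι a b → Real.sign (F x) * deriv F x = Real.sign (F x) * f x := by
    filter_upwards [hf.ae_hasDerivAt_integral] with x hx hxab
    rw [((hx (uIoc_subset_uIcc hxab) a left_mem_uIcc).const_add c).deriv]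
  have h := hF_ac.integral_sign_mul_deriv
  rw [intervalIntegral.integral_congr_ae hF_deriv] at h
  simp only [hF, intervalIntegral.integral_same, add_zero] at h
  linarith

theorem abs_eq_abs_add_integral_sign_mul {v v' : ℝ → ℝ} {a b : ℝ} (hab : a ≤ b)
    (hv' : IntegrableOn v' (Ioc a b)) (hv : ∀ t ∈ Icc a b, v t = v a + ∫ s in Ioc a t, v' s) :
    |v b| = |v a| + ∫ t in Ioc a b, Real.sign (v t) * v' t := by
  have hprim : ∀ t ∈ Icc a b, v a + ∫ s in a..t, v' s = v t := fun t ht => by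
    rw [intervalIntegral.integral_of_le ht.1, ← hv t ht]
  have h := abs_add_intervalIntegral_eq ((intervalIntegrable_iff_integrableOn_Ioc_of_le hab).2 hv')
    (v a)
  rw [hprim b ⟨hab, le_rfl⟩, intervalIntegral.integral_of_le hab] at h
  rw [h]
  congr 1
  refine setIntegral_congr_fun measurableSet_Ioc fun t ht => ?_
  rw [hprim t (Ioc_subset_Icc_self ht)]

theorem stmt_13_general {Ω : Type*} [MeasurableSpace Ω] (μ : Measure Ω) [SigmaFinite μ]
    (T : ℝ) (w dtw : ℝ → Ω → ℝ)
    (hw_meas : Measurable fun p : ℝ × Ω => w p.1 p.2)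
    (hAC : ∀ᵐ x ∂μ, (IntegrableOn (fun t => dtw t x) (Set.Ioc 0 T) volume) ∧
      ∀ t ∈ Set.Icc (0 : ℝ) T, w t x = w 0 x + ∫ s in Set.Ioc (0 : ℝ) t, dtw s x)
    (hdtw_int : Integrable (fun p : ℝ × Ω => dtw p.1 p.2)
      ((volume.restrict (Set.Ioc 0 T)).prod μ))
    (hw0 : Integrable (w 0) μ) :
    ∀ tbar ∈ Set.Icc (0 : ℝ) T, Integrable (w tbar) μ ∧
      ∫ x, |w tbar x| ∂μ =
        (∫ x, |w 0 x| ∂μ) +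
          ∫ t in Set.Ioc (0 : ℝ) tbar, ∫ x, Real.sign (w t x) * dtw t x ∂μ := by
  rintro tbar ⟨htbar0, htbarT⟩
  have hsub : Ioc 0 tbar ⊆ Ioc 0 T := Ioc_subset_Ioc_right htbarT
  have hpointwise : ∀ᵐ x ∂μ,
      |w tbar x| = |w 0 x| + ∫ t in Ioc 0 tbar, Real.sign (w t x) * dtw t x := by
    filter_upwards [hAC] with x ⟨hint, hfun⟩
    exact abs_eq_abs_add_integral_sign_mul htbar0 (hint.mono_set hsub)
      fun t ht => hfun t ⟨ht.1, ht.2.trans htbarT⟩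
  have hprod : Integrable (fun p : ℝ × Ω => Real.sign (w p.1 p.2) * dtw p.1 p.2)
      ((volume.restrict (Ioc 0 tbar)).prod μ) :=
    (hdtw_int.mono_measure (Measure.prod_mono (Measure.restrict_mono hsub le_rfl) le_rfl)).bdd_mul
      (Real.measurable_sign.comp hw_meas).aestronglyMeasurable
      (Eventually.of_forall fun p => Real.abs_sign_le_one _)
  have hslice := hprod.integral_prod_right
  have habs : Integrable (fun x => |w tbar x|) μ :=
    (hw0.abs.add hslice).congr (hpointwise.mono fun x hx => hx.symm)
  refine ⟨(integrable_norm_iff (hw_meas.comp measurable_prodMk_left).aestronglyMeasurable).1 habs,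
    ?_⟩
  rw [integral_congr_ae hpointwise, integral_add hw0.abs hslice]
  exact congrArg _ (integral_integral_swap (f := fun t x => Real.sign (w t x) * dtw t x) hprod).symm

/-- If `w : [0,T] × Ω → ℝ` is measurable, `t ↦ w(t,x)` is absolutely continuous
on `[0,T]` for a.e. `x` with a.e. derivative `∂ₜw` (expressed through the
fundamental theorem of calculus: `w(t,x) = w(0,x) + ∫₀ᵗ ∂ₜw(s,x) ds`), `∂ₜw` is
integrable on `(0,T) × Ω` and `w(0,·) ∈ L¹(Ω)`, then for every `t̄ ∈ [0,T]` the
function `w(t̄,·)` is in `L¹(Ω)` and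
`∫_Ω |w(t̄,x)| dμ = ∫_Ω |w(0,x)| dμ + ∫₀^{t̄} ∫_Ω sgn(w(t,x)) ∂ₜw(t,x) dμ dt`. -/
theorem stmt_13 {Ω : Type*} [MeasurableSpace Ω] (μ : Measure Ω) [SigmaFinite μ]
    (T : ℝ) (hT : 0 < T) (w dtw : ℝ → Ω → ℝ)
    (hw_meas : Measurable fun p : ℝ × Ω => w p.1 p.2)
    (hdtw_meas : Measurable fun p : ℝ × Ω => dtw p.1 p.2)
    (hAC : ∀ᵐ x ∂μ, (IntegrableOn (fun t => dtw t x) (Set.Ioc 0 T) volume) ∧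
      ∀ t ∈ Set.Icc (0 : ℝ) T, w t x = w 0 x + ∫ s in Set.Ioc (0 : ℝ) t, dtw s x)
    (hdtw_int : Integrable (fun p : ℝ × Ω => dtw p.1 p.2)
      ((volume.restrict (Set.Ioc 0 T)).prod μ))
    (hw0 : Integrable (w 0) μ) :
    ∀ tbar ∈ Set.Icc (0 : ℝ) T, Integrable (w tbar) μ ∧
      ∫ x, |w tbar x| ∂μ =
        (∫ x, |w 0 x| ∂μ) +
          ∫ t in Set.Ioc (0 : ℝ) tbar, ∫ x, Real.sign (w t x) * dtw t x ∂μ :=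
  stmt_13_general μ T w dtw hw_meas hAC hdtw_int hw0
end
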